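/- arXiv:2512.08635 — 5 statements merged into one kernel-verified Lean document; each statement's English description precedes it below -/
import Mathlib

section
/- Let N ≥ 1, let X_i = ℂ² for i = 1,…,N with computational basis {|0⟩,|1⟩}, and let A_1,…,A_N be finite-dimensional complex Hilbert spaces. Let S be an operator on X_1⊗⋯⊗X_N⊗A_1⊗⋯⊗A_N of the block-diagonal form S = Σ_{x∈{0,1}^N} |x⟩⟨x| ⊗ Ψ_x, where each Ψ_x is an operator on A_1⊗⋯⊗A_N. Then S satisfies the process conditions (3) if and only if for every nonempty subset I ⊆ {1,…,N} one has (⊗_{j∉I} Tr_{A_j}) ( Σ_{x∈{0,1}^N} (∏_{i∈I} (−1)^{x_i}) Ψ_x ) = 0 as an operator on ⊗_{i∈I} A_i. -/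
open scoped BigOperators ComplexOrder

namespace ParityErasurePaper

/-- A density matrix: a positive semidefinite operator of trace one. -/
def IsDensity {n : Type*} [Fintype n] (ρ : Matrix n n ℂ) : Prop :=
  ρ.PosSemidef ∧ ρ.trace = 1

variable {N : ℕ}

/-- Basis indices for the tensor product `⊗_{i} H_i` where `dim H_i = d i`. -/
abbrev PiIx (d : Fin N → ℕ) : Type := (i : Fin N) → Fin (d i)

/-- Basis indices for `X_1 ⊗ ⋯ ⊗ X_N ⊗ A_1 ⊗ ⋯ ⊗ A_N`. -/
abbrev BigIx (dX dA : Fin N → ℕ) : Type := PiIx dX × PiIx dA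

/-- `P_{X_k}(S) = Tr_{X_k}(S) ⊗ I_{X_k}/d_{X_k}` (with the factor re-inserted in place). -/
noncomputable def depolX (dX dA : Fin N → ℕ) (k : Fin N)
    (S : Matrix (BigIx dX dA) (BigIx dX dA) ℂ) : Matrix (BigIx dX dA) (BigIx dX dA) ℂ :=
  Matrix.of fun p q =>
    (if p.1 k = q.1 k then ((dX k : ℂ))⁻¹ else 0) *
      ∑ z : Fin (dX k), S (Function.update p.1 k z, p.2) (Function.update q.1 k z, q.2)

/-- `P_{A_k}(S) = Tr_{A_k}(S) ⊗ I_{A_k}/d_{A_k}` (with the factor re-inserted in place). -/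
noncomputable def depolA (dX dA : Fin N → ℕ) (k : Fin N)
    (S : Matrix (BigIx dX dA) (BigIx dX dA) ℂ) : Matrix (BigIx dX dA) (BigIx dX dA) ℂ :=
  Matrix.of fun p q =>
    (if p.2 k = q.2 k then ((dA k : ℂ))⁻¹ else 0) *
      ∑ z : Fin (dA k), S (p.1, Function.update p.2 k z) (q.1, Function.update q.2 k z)

/-- The process conditions (3): for every nonempty `I ⊆ {1,…,N}`,
`(∘_{i∈I} (id − P_{X_i})) ∘ (∘_{j∉I} (P_{A_j} ∘ P_{X_j})) (S) = 0`
(the maps commute, so the order of composition is irrelevant). -/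
def ProcessConditions (dX dA : Fin N → ℕ)
    (S : Matrix (BigIx dX dA) (BigIx dX dA) ℂ) : Prop :=
  ∀ I : Finset (Fin N), I.Nonempty →
    ((I.toList.map fun i => fun S' => S' - depolX dX dA i S').foldr (· ∘ ·) id)
      (((Iᶜ.toList.map fun j => fun S' => depolA dX dA j (depolX dX dA j S')).foldr
        (· ∘ ·) id) S) = 0

/-- Partial trace over the tensor factors outside `I`, giving an operator on `⊗_{i∈I} H_i`. -/
noncomputable def ptraceOut {d : Fin N → ℕ} (I : Finset (Fin N)) (M : Matrix (PiIx d) (PiIx d) ℂ) :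
    Matrix ((i : {m // m ∈ I}) → Fin (d i.1)) ((i : {m // m ∈ I}) → Fin (d i.1)) ℂ :=
  Matrix.of fun a b => ∑ c : (j : {m // m ∉ I}) → Fin (d j.1),
    M (fun i => if h : i ∈ I then a ⟨i, h⟩ else c ⟨i, h⟩)
      (fun i => if h : i ∈ I then b ⟨i, h⟩ else c ⟨i, h⟩)

/-- The channel induced by a Choi matrix `S`: `T(ρ) = Tr_input[(ρ^T ⊗ I) S]`,
with the transpose taken in the fixed basis used to express `S`. -/
noncomputable def chan {ι κ : Type*} [Fintype ι] [Fintype κ] [DecidableEq κ]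
    (S : Matrix (ι × κ) (ι × κ) ℂ) (ρ : Matrix ι ι ℂ) : Matrix κ κ ℂ :=
  Matrix.of fun a b => ∑ x : ι,
    ((Matrix.of fun p q : ι × κ => ρ.transpose p.1 q.1 * (if p.2 = q.2 then (1 : ℂ) else 0))
      * S) (x, a) (x, b)

/-- `T` is parity-erasure: for every nonempty `I`, all choices of density matrices
`ρ_{i,0}, ρ_{i,1}` (`i ∈ I`) and `σ_j` (`j ∉ I`), the partial trace over `(A_j)_{j∉I}` of
`T(⊗_{i∈I}(ρ_{i,0} − ρ_{i,1}) ⊗ ⊗_{j∉I} σ_j)` vanishes. -/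
def IsParityErasure (dX dA : Fin N → ℕ)
    (T : Matrix (PiIx dX) (PiIx dX) ℂ → Matrix (PiIx dA) (PiIx dA) ℂ) : Prop :=
  ∀ I : Finset (Fin N), I.Nonempty →
    ∀ ρ : (i : Fin N) → Fin 2 → Matrix (Fin (dX i)) (Fin (dX i)) ℂ,
    ∀ σ : (i : Fin N) → Matrix (Fin (dX i)) (Fin (dX i)) ℂ,
    (∀ i b, IsDensity (ρ i b)) → (∀ j, IsDensity (σ j)) →
    ptraceOut I (T (Matrix.of fun x y =>
        (∏ i ∈ I, (ρ i 0 - ρ i 1) (x i) (y i)) * ∏ j ∈ Iᶜ, σ j (x j) (y j))) = 0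

-- block functions
abbrev Blk (dA : Fin N → ℕ) : Type := (Fin N → Fin 2) → Matrix (PiIx dA) (PiIx dA) ℂ

noncomputable def embed (dA : Fin N → ℕ) (F : Blk dA) :
    Matrix (BigIx (fun _ => 2) dA) (BigIx (fun _ => 2) dA) ℂ :=
  Matrix.of fun p q => if p.1 = q.1 then F p.1 p.2 q.2 else 0

noncomputable def QX (dA : Fin N → ℕ) (k : Fin N) (F : Blk dA) : Blk dA :=
  fun x => (2:ℂ)⁻¹ • (F (Function.update x k 0) + F (Function.update x k 1))

noncomputable def TX (dA : Fin N → ℕ) (k : Fin N) (F : Blk dA) : Blk dA :=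
  fun x => F x - QX dA k F x

noncomputable def DAm (dA : Fin N → ℕ) (k : Fin N)
    (M : Matrix (PiIx dA) (PiIx dA) ℂ) : Matrix (PiIx dA) (PiIx dA) ℂ :=
  Matrix.of fun a b => (if a k = b k then ((dA k : ℂ))⁻¹ else 0) *
    ∑ z : Fin (dA k), M (Function.update a k z) (Function.update b k z)

noncomputable def DAX (dA : Fin N → ℕ) (k : Fin N) (F : Blk dA) : Blk dA :=
  fun x => DAm dA k (QX dA k F x)

lemma update_eq_update_iff {x y : Fin N → Fin 2} {k : Fin N} {z : Fin 2}
    (hk : x k = y k) (h : Function.update x k z = Function.update y k z) : x = y := by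
  funext j
  by_cases hj : j = k
  · subst hj; exact hk
  · have := congrFun h j
    simpa [Function.update_of_ne hj] using this

lemma depolX_embed (dA : Fin N → ℕ) (k : Fin N) (F : Blk dA) :
    depolX (fun _ => 2) dA k (embed dA F) = embed dA (QX dA k F) := by
  ext ⟨x, a⟩ ⟨y, b⟩
  simp only [depolX, embed, QX, Matrix.of_apply]
  by_cases hxy : x = y
  · subst hxy
    simp [Fin.sum_univ_two, Matrix.smul_apply, Matrix.add_apply, mul_add, smul_eq_mul, mul_comm]
  · by_cases hk : x k = y k
    · have h0 : ∀ z : Fin 2, ¬ (Function.update x k z = Function.update y k z) := by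
        intro z h; exact hxy (update_eq_update_iff hk h)
      simp [hxy, hk, h0]
    · simp [hxy, hk]

lemma depolA_embed (dA : Fin N → ℕ) (k : Fin N) (F : Blk dA) :
    depolA (fun _ => 2) dA k (embed dA F) =
      embed dA (fun x => DAm dA k (F x)) := by
  ext ⟨x, a⟩ ⟨y, b⟩
  simp only [depolA, embed, DAm, Matrix.of_apply]
  by_cases hxy : x = y
  · subst hxy; simp
  · simp [hxy]

lemma embed_sub (dA : Fin N → ℕ) (F G : Blk dA) :
    embed dA F - embed dA G = embed dA (fun x a b => F x a b - G x a b) := by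
  ext ⟨x, a⟩ ⟨y, b⟩
  by_cases hxy : x = y <;> simp [embed, hxy]

lemma embed_eq_zero (dA : Fin N → ℕ) (F : Blk dA) :
    embed dA F = 0 ↔ ∀ x, F x = 0 := by
  constructor
  · intro h x
    ext a b
    have := congrFun (congrFun h (x, a)) ((x, b))
    simpa [embed] using this
  · intro h
    ext ⟨x, a⟩ ⟨y, b⟩
    by_cases hxy : x = y <;> simp [embed, hxy, h]

lemma fold_embed (dA : Fin N → ℕ) (l : List (Fin N))
    (big : Fin N → Matrix (BigIx (fun _ => 2) dA) (BigIx (fun _ => 2) dA) ℂ →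
      Matrix (BigIx (fun _ => 2) dA) (BigIx (fun _ => 2) dA) ℂ)
    (blk : Fin N → Blk dA → Blk dA)
    (h : ∀ k F, big k (embed dA F) = embed dA (blk k F)) (F : Blk dA) :
    ((l.map big).foldr (· ∘ ·) id) (embed dA F) =
      embed dA (((l.map blk).foldr (· ∘ ·) id) F) := by
  induction l with
  | nil => rfl
  | cons k l ih => simp only [List.map_cons, List.foldr_cons, Function.comp_apply, ih, h]


lemma fin2cases : ∀ t : Fin 2, t = 0 ∨ t = 1 := by decide

lemma fold_TX (dA : Fin N → ℕ) (F : Blk dA) :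
    ∀ l : List (Fin N), l.Nodup → ∀ x : Fin N → Fin 2,
      ((l.map (TX dA)).foldr (· ∘ ·) id) F x =
        ((2:ℂ) ^ l.length)⁻¹ • ∑ y : Fin N → Fin 2,
          (if ∀ j, j ∉ l → y j = x j then
            ∏ i ∈ l.toFinset, (-1:ℂ) ^ ((x i : ℕ) + (y i : ℕ)) else 0) • F y := by
  intro l
  induction l with
  | nil =>
      intro _ x
      simp [← funext_iff, ite_smul, Fintype.sum_ite_eq']
  | cons k l ih =>
      intro hl x
      obtain ⟨hk, hl'⟩ := List.nodup_cons.mp hl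
      simp only [List.map_cons, List.foldr_cons, Function.comp_apply, TX, QX]
      rw [ih hl' x, ih hl' (Function.update x k 0), ih hl' (Function.update x k 1)]
      have hmem : ∀ j : Fin N, j ∉ (k :: l) ↔ (j ≠ k ∧ j ∉ l) := by
        intro j; simp [List.mem_cons, not_or]
      simp only [Finset.smul_sum, smul_smul, smul_add, ← Finset.sum_add_distrib,
        ← Finset.sum_sub_distrib, List.length_cons]
      refine Finset.sum_congr rfl fun y _ => ?_
      rw [← add_smul, ← sub_smul]
      refine congrArg (· • F y) ?_
      have hPz : ∀ z : Fin 2,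
          (∏ i ∈ l.toFinset, (-1:ℂ) ^ (((Function.update x k z) i : ℕ) + (y i : ℕ)))
            = ∏ i ∈ l.toFinset, (-1:ℂ) ^ ((x i : ℕ) + (y i : ℕ)) := by
        intro z
        refine Finset.prod_congr rfl fun i hi => ?_
        rw [Function.update_of_ne (by rintro rfl; exact hk (List.mem_toFinset.mp hi))]
      have condx : (∀ j, j ∉ l → y j = x j) ↔
          (y k = x k ∧ ∀ j, j ∉ (k :: l) → y j = x j) := by
        constructor
        · intro h; exact ⟨h k hk, fun j hj => h j ((hmem j).mp hj).2⟩
        · rintro ⟨h1, h2⟩ j hjl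
          by_cases hjk : j = k
          · subst hjk; exact h1
          · exact h2 j ((hmem j).mpr ⟨hjk, hjl⟩)
      have condz : ∀ z : Fin 2, (∀ j, j ∉ l → y j = Function.update x k z j) ↔
          (y k = z ∧ ∀ j, j ∉ (k :: l) → y j = x j) := by
        intro z
        constructor
        · intro h
          refine ⟨by simpa using h k hk, fun j hj => ?_⟩
          obtain ⟨hjk, hjl⟩ := (hmem j).mp hj
          simpa [Function.update_of_ne hjk] using h j hjl
        · rintro ⟨h1, h2⟩ j hjl
          by_cases hjk : j = k
          · subst hjk; simpa using h1
          · rw [Function.update_of_ne hjk]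
            exact h2 j ((hmem j).mpr ⟨hjk, hjl⟩)
      rw [hPz 0, hPz 1, List.toFinset_cons, Finset.prod_insert (by simp [hk])]
      by_cases hR : ∀ j, j ∉ (k :: l) → y j = x j
      · simp only [condx, condz, eq_true hR, and_true]
        rcases fin2cases (y k) with hy | hy <;>
          rcases fin2cases (x k) with hx | hx <;>
            simp [hy, hx, pow_add, pow_succ, mul_inv] <;> ring
      · simp only [condx, condz, eq_false hR, and_false, if_false]
        simp


lemma DAm_smul (dA : Fin N → ℕ) (k : Fin N) (r : ℂ) (M : Matrix (PiIx dA) (PiIx dA) ℂ) :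
    DAm dA k (r • M) = r • DAm dA k M := by
  ext a b
  simp only [DAm, Matrix.smul_apply, Matrix.of_apply, smul_eq_mul, ← Finset.mul_sum]
  ring

lemma DAm_add (dA : Fin N → ℕ) (k : Fin N) (M₁ M₂ : Matrix (PiIx dA) (PiIx dA) ℂ) :
    DAm dA k (M₁ + M₂) = DAm dA k M₁ + DAm dA k M₂ := by
  ext a b
  simp only [DAm, Matrix.add_apply, Matrix.of_apply, Finset.sum_add_distrib]
  ring

lemma DAm_sum_smul {ι : Type*} (s : Finset ι) (dA : Fin N → ℕ) (k : Fin N)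
    (r : ι → ℂ) (f : ι → Matrix (PiIx dA) (PiIx dA) ℂ) :
    DAm dA k (∑ w ∈ s, r w • f w) = ∑ w ∈ s, r w • DAm dA k (f w) := by
  classical
  induction s using Finset.induction_on with
  | empty => simp [show DAm dA k 0 = 0 by ext a b; simp [DAm]]
  | insert _ _ hws ih =>
      rw [Finset.sum_insert hws, DAm_add, DAm_smul, ih, Finset.sum_insert hws]

lemma fold_DAm_sum_smul {ι : Type*} (s : Finset ι) (dA : Fin N → ℕ) (l : List (Fin N))
    (r : ι → ℂ) (f : ι → Matrix (PiIx dA) (PiIx dA) ℂ) :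
    ((l.map (DAm dA)).foldr (· ∘ ·) id) (∑ w ∈ s, r w • f w) =
      ∑ w ∈ s, r w • ((l.map (DAm dA)).foldr (· ∘ ·) id) (f w) := by
  induction l with
  | nil => simp
  | cons k l ih =>
      simp only [List.map_cons, List.foldr_cons, Function.comp_apply, ih, DAm_sum_smul]

lemma fold_DAX (dA : Fin N → ℕ) (F : Blk dA) :
    ∀ l : List (Fin N), l.Nodup → ∀ x : Fin N → Fin 2,
      ((l.map (DAX dA)).foldr (· ∘ ·) id) F x =
        ((2:ℂ) ^ l.length)⁻¹ • ∑ y : Fin N → Fin 2,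
          (if ∀ j, j ∉ l → y j = x j then (1:ℂ) else 0) •
            ((l.map (DAm dA)).foldr (· ∘ ·) id) (F y) := by
  intro l
  induction l with
  | nil =>
      intro _ x
      simp [← funext_iff, ite_smul, Fintype.sum_ite_eq']
  | cons k l ih =>
      intro hl x
      obtain ⟨hk, hl'⟩ := List.nodup_cons.mp hl
      have hmem : ∀ j : Fin N, j ∉ (k :: l) ↔ (j ≠ k ∧ j ∉ l) := by
        intro j; simp [List.mem_cons, not_or]
      simp only [List.map_cons, List.foldr_cons, Function.comp_apply, DAX, QX]
      rw [ih hl' (Function.update x k 0), ih hl' (Function.update x k 1)]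
      rw [smul_add, ← smul_add, DAm_smul, DAm_add, DAm_smul, DAm_smul, DAm_sum_smul, DAm_sum_smul]
      simp only [Finset.smul_sum, smul_smul, smul_add, ← Finset.sum_add_distrib,
        List.length_cons]
      refine Finset.sum_congr rfl fun y _ => ?_
      rw [← add_smul]
      refine congrArg (fun r : ℂ => r • DAm dA k (((l.map (DAm dA)).foldr (· ∘ ·) id) (F y))) ?_
      have condz : ∀ z : Fin 2, (∀ j, j ∉ l → y j = Function.update x k z j) ↔
          (y k = z ∧ ∀ j, j ∉ (k :: l) → y j = x j) := by
        intro z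
        constructor
        · intro h
          refine ⟨by simpa using h k hk, fun j hj => ?_⟩
          obtain ⟨hjk, hjl⟩ := (hmem j).mp hj
          simpa [Function.update_of_ne hjk] using h j hjl
        · rintro ⟨h1, h2⟩ j hjl
          by_cases hjk : j = k
          · subst hjk; simpa using h1
          · rw [Function.update_of_ne hjk]
            exact h2 j ((hmem j).mpr ⟨hjk, hjl⟩)
      by_cases hR : ∀ j, j ∉ (k :: l) → y j = x j
      · simp only [condz, eq_true hR, and_true]
        rcases fin2cases (y k) with hy | hy <;>
          simp [hy, pow_succ, mul_inv] <;> ring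
      · simp only [condz, eq_false hR, and_false, if_false]
        simp


lemma fold_DAm (dA : Fin N → ℕ) (M : Matrix (PiIx dA) (PiIx dA) ℂ) :
    ∀ l : List (Fin N), l.Nodup → ∀ a b : PiIx dA,
      ((l.map (DAm dA)).foldr (· ∘ ·) id) M a b =
        (∏ j ∈ l.toFinset, if a j = b j then ((dA j : ℂ))⁻¹ else 0) *
          ∑ c : PiIx dA, (if ∀ j, j ∉ l → c j = a j then
            M c (fun j => if j ∈ l then c j else b j) else 0) := by
  intro l
  induction l with
  | nil =>
      intro _ a b
      simp [← funext_iff, Fintype.sum_ite_eq']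
  | cons k l ih =>
      intro hl a b
      obtain ⟨hk, hl'⟩ := List.nodup_cons.mp hl
      have hmem : ∀ j : Fin N, j ∉ (k :: l) ↔ (j ≠ k ∧ j ∉ l) := by
        intro j; simp [List.mem_cons, not_or]
      simp only [List.map_cons, List.foldr_cons, Function.comp_apply, DAm, Matrix.of_apply]
      -- rewrite inner entries via ih
      have hIH : ∀ z : Fin (dA k),
          ((l.map (DAm dA)).foldr (· ∘ ·) id) M (Function.update a k z) (Function.update b k z)
            = (∏ j ∈ l.toFinset, if a j = b j then ((dA j : ℂ))⁻¹ else 0) *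
              ∑ c : PiIx dA, (if ∀ j, j ∉ l → c j = Function.update a k z j then
                M c (fun j => if j ∈ l then c j else Function.update b k z j) else 0) := by
        intro z
        rw [ih hl']
        congr 1
        refine Finset.prod_congr rfl fun j hj => ?_
        have hjk : j ≠ k := by rintro rfl; exact hk (List.mem_toFinset.mp hj)
        rw [Function.update_of_ne hjk, Function.update_of_ne hjk]
      simp only [hIH, ← Finset.mul_sum]
      rw [Finset.sum_comm]
      have key : ∀ c : PiIx dA,
          (∑ z : Fin (dA k), if ∀ j, j ∉ l → c j = Function.update a k z j then
              M c (fun j => if j ∈ l then c j else Function.update b k z j) else 0)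
            = if ∀ j, j ∉ (k :: l) → c j = a j then
                M c (fun j => if j ∈ (k :: l) then c j else b j) else 0 := by
        intro c
        have condz : ∀ z : Fin (dA k), (∀ j, j ∉ l → c j = Function.update a k z j) ↔
            (c k = z ∧ ∀ j, j ∉ (k :: l) → c j = a j) := by
          intro z
          constructor
          · intro h
            refine ⟨by simpa using h k hk, fun j hj => ?_⟩
            obtain ⟨hjk, hjl⟩ := (hmem j).mp hj
            simpa [Function.update_of_ne hjk] using h j hjl
          · rintro ⟨h1, h2⟩ j hjl
            by_cases hjk : j = k
            · subst hjk; simpa using h1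
            · rw [Function.update_of_ne hjk]
              exact h2 j ((hmem j).mpr ⟨hjk, hjl⟩)
        by_cases hR : ∀ j, j ∉ (k :: l) → c j = a j
        · simp only [condz, eq_true hR, and_true, if_pos hR]
          have harg : ∀ z : Fin (dA k), c k = z →
              (fun j => if j ∈ l then c j else Function.update b k z j)
                = fun j => if j ∈ (k :: l) then c j else b j := by
            intro z hz
            funext j
            by_cases hjl : j ∈ l
            · simp [hjl, List.mem_cons, hjl]
            · by_cases hjk : j = k
              · subst hjk
                simp [hjl, ← hz]
              · simp [hjl, hjk, Function.update_of_ne hjk, List.mem_cons]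
          rw [Finset.sum_eq_single (c k)]
          · rw [if_pos rfl, harg (c k) rfl]; simp
          · intro z _ hz
            rw [if_neg (by simpa using fun h => hz h.symm)]
          · intro h; exact absurd (Finset.mem_univ _) h
        · simp only [condz, eq_false hR, and_false, if_false, Finset.sum_const_zero]
      simp only [key]
      rw [List.toFinset_cons, Finset.prod_insert (by simp [hk]), mul_assoc]


lemma fold_DAm_ptrace (dA : Fin N → ℕ) (I : Finset (Fin N)) (M : Matrix (PiIx dA) (PiIx dA) ℂ)
    (a b : PiIx dA) :
    ((Iᶜ.toList.map (DAm dA)).foldr (· ∘ ·) id) M a b =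
      (∏ j ∈ Iᶜ, if a j = b j then ((dA j : ℂ))⁻¹ else 0) *
        ptraceOut I M (fun i => a i.1) (fun i => b i.1) := by
  classical
  rw [fold_DAm dA M Iᶜ.toList (Finset.nodup_toList _) a b, Finset.toList_toFinset]
  congr 1
  simp only [Finset.mem_toList, Finset.mem_compl, not_not]
  rw [← Equiv.sum_comp (Equiv.piEquivPiSubtypeProd (fun j : Fin N => j ∈ I) (fun j : Fin N => Fin (dA j))).symm]
  rw [Fintype.sum_prod_type]
  have hcond : ∀ (u : (i : {x // x ∈ I}) → Fin (dA i.1)) (v : (j : {x // ¬ x ∈ I}) → Fin (dA j.1)),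
      (∀ j, j ∈ I →
        (Equiv.piEquivPiSubtypeProd (fun j : Fin N => j ∈ I) (fun j : Fin N => Fin (dA j))).symm (u, v) j = a j)
        ↔ u = fun i : {x // x ∈ I} => a i.1 := by
    intro u v
    constructor
    · intro h; funext i
      have := h i.1 i.2
      simpa [Equiv.piEquivPiSubtypeProd_symm_apply, i.2] using this
    · intro h j hj
      subst h
      simp [Equiv.piEquivPiSubtypeProd_symm_apply, hj]
  simp only [hcond]
  rw [Finset.sum_eq_single (fun i : {x // x ∈ I} => a i.1)]
  · simp only [eq_self_iff_true, if_true]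
    simp only [ptraceOut, Matrix.of_apply]
    refine Finset.sum_congr rfl fun v _ => ?_
    congr 1
    all_goals funext j
    all_goals by_cases hj : j ∈ I <;> simp [Equiv.piEquivPiSubtypeProd_symm_apply, hj]
  · intro u _ hu
    simp only [if_neg hu, Finset.sum_const_zero]
  · intro h; exact absurd (Finset.mem_univ _) h

lemma foldD_eq_zero_iff (dA : Fin N → ℕ) (I : Finset (Fin N))
    (M : Matrix (PiIx dA) (PiIx dA) ℂ) :
    ((Iᶜ.toList.map (DAm dA)).foldr (· ∘ ·) id) M = 0 ↔ ptraceOut I M = 0 := by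
  classical
  constructor
  · intro h
    by_cases hpos : ∀ j, j ∉ I → dA j ≠ 0
    · have hne : ∀ j, j ∉ I → 0 < dA j := fun j hj => Nat.pos_of_ne_zero (hpos j hj)
      ext α β
      set a : PiIx dA := fun j => if h : j ∈ I then α ⟨j, h⟩ else ⟨0, hne j h⟩ with ha
      set b : PiIx dA := fun j => if h : j ∈ I then β ⟨j, h⟩ else ⟨0, hne j h⟩ with hb
      have h1 := congrFun (congrFun h a) b
      rw [fold_DAm_ptrace dA I M a b] at h1
      have hresA : (fun i : {m // m ∈ I} => a i.1) = α := by
        funext i; simp [ha, i.2]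
      have hresB : (fun i : {m // m ∈ I} => b i.1) = β := by
        funext i; simp [hb, i.2]
      rw [hresA, hresB] at h1
      have hpre : (∏ j ∈ Iᶜ, if a j = b j then ((dA j : ℂ))⁻¹ else 0) ≠ 0 := by
        rw [Finset.prod_ne_zero_iff]
        intro j hj
        have hj' : j ∉ I := Finset.mem_compl.mp hj
        rw [if_pos (by simp [ha, hb, hj'])]
        exact inv_ne_zero (Nat.cast_ne_zero.mpr (hpos j hj'))
      simp only [Matrix.zero_apply] at h1 ⊢
      rcases mul_eq_zero.mp h1 with h2 | h2
      · exact absurd h2 hpre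
      · exact h2
    · push_neg at hpos
      obtain ⟨j, hj, hj0⟩ := hpos
      have hemp : IsEmpty ((j : {m // m ∉ I}) → Fin (dA j.1)) := by
        refine ⟨fun γ => ?_⟩
        have hγ := γ ⟨j, hj⟩
        rw [hj0] at hγ
        exact hγ.elim0
      ext α β
      simp [ptraceOut, Finset.univ_eq_empty]
  · intro h
    ext a b
    rw [fold_DAm_ptrace dA I M a b, h]
    simp


lemma embed_TX (dA : Fin N → ℕ) (k : Fin N) (F : Blk dA) :
    embed dA F - depolX (fun _ => 2) dA k (embed dA F) = embed dA (TX dA k F) := by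
  rw [depolX_embed, embed_sub]
  rfl

lemma embed_DAX (dA : Fin N → ℕ) (k : Fin N) (F : Blk dA) :
    depolA (fun _ => 2) dA k (depolX (fun _ => 2) dA k (embed dA F))
      = embed dA (DAX dA k F) := by
  rw [depolX_embed, depolA_embed]
  rfl

/-- for `S = Σ_x |x⟩⟨x| ⊗ Ψ_x` on `X_1⊗⋯⊗X_N⊗A_1⊗⋯⊗A_N` with each `X_i = ℂ²`,
the process conditions (3) hold if and only if for every nonempty `I ⊆ {1,…,N}`,
`(⊗_{j∉I} Tr_{A_j}) (Σ_x (∏_{i∈I} (−1)^{x_i}) Ψ_x) = 0` as an operator on `⊗_{i∈I} A_i`. -/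
theorem statement_0 {N : ℕ} (hN : 1 ≤ N) (dA : Fin N → ℕ)
    (Ψ : (Fin N → Fin 2) → Matrix (PiIx dA) (PiIx dA) ℂ)
    (S : Matrix (BigIx (fun _ => 2) dA) (BigIx (fun _ => 2) dA) ℂ)
    (hS : S = Matrix.of fun p q => if p.1 = q.1 then Ψ p.1 p.2 q.2 else 0) :
    ProcessConditions (fun _ => 2) dA S ↔
      ∀ I : Finset (Fin N), I.Nonempty →
        ptraceOut I (∑ x : Fin N → Fin 2, (∏ i ∈ I, (-1 : ℂ) ^ ((x i : ℕ))) • Ψ x) = 0 := by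
  classical
  have hS' : S = embed dA Ψ := hS
  unfold ProcessConditions
  refine forall_congr' fun I => imp_congr_right fun _ => ?_
  rw [hS']
  rw [fold_embed dA Iᶜ.toList (fun j => fun S' => depolA (fun _ => 2) dA j
      (depolX (fun _ => 2) dA j S')) (DAX dA) (embed_DAX dA) Ψ]
  rw [fold_embed dA I.toList (fun i => fun S' => S' - depolX (fun _ => 2) dA i S')
      (TX dA) (embed_TX dA) _]
  rw [embed_eq_zero]
  set Sm : Matrix (PiIx dA) (PiIx dA) ℂ :=
    ∑ w : Fin N → Fin 2, (∏ i ∈ I, (-1 : ℂ) ^ ((w i : ℕ))) • Ψ w with hSm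
  have hGx : ∀ x : Fin N → Fin 2,
      ((I.toList.map (TX dA)).foldr (· ∘ ·) id)
        (((Iᶜ.toList.map (DAX dA)).foldr (· ∘ ·) id) Ψ) x
      = (((2:ℂ) ^ I.toList.length)⁻¹ * ((2:ℂ) ^ Iᶜ.toList.length)⁻¹ *
          ∏ i ∈ I, (-1:ℂ) ^ ((x i : ℕ))) •
          ((Iᶜ.toList.map (DAm dA)).foldr (· ∘ ·) id) Sm := by
    intro x
    rw [fold_TX dA _ I.toList (Finset.nodup_toList I) x]
    simp only [fold_DAX dA Ψ Iᶜ.toList (Finset.nodup_toList _)]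
    rw [hSm, fold_DAm_sum_smul]
    simp only [Finset.smul_sum, smul_smul, Finset.toList_toFinset]
    rw [Finset.sum_comm]
    refine Finset.sum_congr rfl fun w _ => ?_
    rw [← Finset.sum_smul]
    refine congrArg (fun r : ℂ => r • ((Iᶜ.toList.map (DAm dA)).foldr (· ∘ ·) id) (Ψ w)) ?_
    rw [Finset.sum_eq_single (fun j => if j ∈ I then w j else x j)]
    · have c1 : ∀ j : Fin N, j ∉ I.toList → (if j ∈ I then w j else x j) = x j := by
        intro j hj
        rw [Finset.mem_toList] at hj
        simp [hj]
      have c2 : ∀ j : Fin N, j ∉ Iᶜ.toList → w j = (if j ∈ I then w j else x j) := by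
        intro j hj
        rw [Finset.mem_toList, Finset.mem_compl, not_not] at hj
        simp [hj]
      rw [if_pos c1, if_pos c2]
      have hprd : ∀ i ∈ I,
          (-1:ℂ) ^ ((x i : ℕ) + (((fun j => if j ∈ I then w j else x j) i) : ℕ))
            = (-1:ℂ) ^ ((x i : ℕ)) * (-1:ℂ) ^ ((w i : ℕ)) := by
        intro i hi; simp [hi, pow_add]
      rw [Finset.prod_congr rfl hprd, Finset.prod_mul_distrib]
      ring
    · intro y _ hy
      by_cases c1 : ∀ j : Fin N, j ∉ I.toList → y j = x j
      · by_cases c2 : ∀ j : Fin N, j ∉ Iᶜ.toList → w j = y j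
        · exfalso
          apply hy
          funext j
          by_cases hj : j ∈ I
          · simp only [if_pos hj]
            exact (c2 j (by simp [Finset.mem_toList, hj])).symm
          · simp only [if_neg hj]
            exact c1 j (by simp [Finset.mem_toList, hj])
        · rw [if_neg c2]
          ring
      · rw [if_neg c1]
        ring
    · intro h; exact absurd (Finset.mem_univ _) h
  constructor
  · intro h
    rw [← foldD_eq_zero_iff dA I]
    have h0 := h (fun _ => (0 : Fin 2))
    rw [hGx] at h0
    have hc : (((2:ℂ) ^ I.toList.length)⁻¹ * ((2:ℂ) ^ Iᶜ.toList.length)⁻¹ *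
        ∏ i ∈ I, (-1:ℂ) ^ (((fun _ => (0 : Fin 2)) i : ℕ))) ≠ 0 := by
      simp
    rcases smul_eq_zero.mp h0 with h2 | h2
    · exact absurd h2 hc
    · exact h2
  · intro h x
    rw [hGx x, (foldD_eq_zero_iff dA I Sm).mpr h, smul_zero]

end ParityErasurePaper
end

section
/- Let X_1,…,X_N and A_1,…,A_N be finite-dimensional complex Hilbert spaces and let S be an operator on X_1⊗⋯⊗X_N⊗A_1⊗⋯⊗A_N satisfying the process conditions (3). Let T be the induced linear map from operators on X_1⊗⋯⊗X_N to operators on A_1⊗⋯⊗A_N given by T(ρ) := Tr_{X_1⊗⋯⊗X_N}[(ρ^T ⊗ I_{A_1⊗⋯⊗A_N}) S], where ρ^T is the transpose in a fixed orthonormal basis (the one used to express S). Then T is parity-erasure: for every nonempty subset I ⊆ {1,…,N}, all density matrices ρ_{i,0}, ρ_{i,1} on X_i for i ∈ I, and all density matrices σ_j on X_j for j ∉ I, the partial trace over the factors (A_j)_{j∉I} of T( ⊗_{i∈I}(ρ_{i,0} − ρ_{i,1}) ⊗ ⊗_{j∉I} σ_j ) (each factor placed in its position i) is the zero operator on ⊗_{i∈I}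 A_i. -/
open scoped BigOperators ComplexOrder

namespace ParityErasurePaper

variable {N : ℕ}

section Aux

lemma sum_update_general {ι : Type*} [Fintype ι] [DecidableEq ι] {κ : ι → Type*}
    [∀ i, Fintype (κ i)] (k : ι) (H : (∀ i, κ i) → ℂ) :
    ∑ c : ∀ i, κ i, ∑ z : κ k, H (Function.update c k z)
      = (Fintype.card (κ k) : ℂ) * ∑ c, H c := by
  classical
  have hinv : Function.Involutive
      (fun p : κ k × (∀ i, κ i) => (p.2 k, Function.update p.2 k p.1)) := by
    intro p; simp
  calc ∑ c : ∀ i, κ i, ∑ z : κ k, H (Function.update c k z)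
      = ∑ z : κ k, ∑ c : ∀ i, κ i, H (Function.update c k z) := Finset.sum_comm
    _ = ∑ p : κ k × ∀ i, κ i, H (Function.update p.2 k p.1) :=
        (Fintype.sum_prod_type (f := fun p : κ k × (∀ i, κ i) =>
          H (Function.update p.2 k p.1))).symm
    _ = ∑ p : κ k × ∀ i, κ i, H p.2 := by
        rw [← Equiv.sum_comp hinv.toPerm
          (fun p : κ k × (∀ i, κ i) => H (Function.update p.2 k p.1))]
        refine Finset.sum_congr rfl fun p _ => ?_
        simp [Function.Involutive.coe_toPerm]
    _ = (Fintype.card (κ k) : ℂ) * ∑ c, H c := by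
        rw [Fintype.sum_prod_type (f := fun p : κ k × (∀ i, κ i) => H p.2)]
        simp [Finset.sum_const, nsmul_eq_mul]

lemma resum {N : ℕ} (dX : Fin N → ℕ) (k : Fin N) (hk : (dX k : ℂ) ≠ 0)
    (H : PiIx dX → ℂ) :
    ∑ x : PiIx dX, H x
      = (dX k : ℂ)⁻¹ * ∑ x : PiIx dX, ∑ t : Fin (dX k), H (Function.update x k t) := by
  rw [sum_update_general k H, Fintype.card_fin, ← mul_assoc, inv_mul_cancel₀ hk, one_mul]

end Aux
variable {N : ℕ}

/-- Insert `a` on coordinates in `I` and `c` outside. -/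
def ins {d : Fin N → ℕ} (I : Finset (Fin N))
    (a : (i : {m // m ∈ I}) → Fin (d i.1)) (c : (j : {m // m ∉ I}) → Fin (d j.1)) :
    PiIx d :=
  fun i => if h : i ∈ I then a ⟨i, h⟩ else c ⟨i, h⟩

/-- The fundamental functional. -/
noncomputable def F (dX dA : Fin N → ℕ) (I : Finset (Fin N))
    (w : ∀ i, Matrix (Fin (dX i)) (Fin (dX i)) ℂ)
    (a b : (i : {m // m ∈ I}) → Fin (dA i.1))
    (S : Matrix (BigIx dX dA) (BigIx dX dA) ℂ) : ℂ :=
  ∑ x : PiIx dX, ∑ y : PiIx dX, ∑ c : (j : {m // m ∉ I}) → Fin (dA j.1),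
    (∏ i, w i (y i) (x i)) * S (y, ins I a c) (x, ins I b c)

lemma F_zero (dX dA : Fin N → ℕ) (I : Finset (Fin N)) (w) (a b) :
    F dX dA I w a b 0 = 0 := by
  simp [F]

lemma F_sub (dX dA : Fin N → ℕ) (I : Finset (Fin N)) (w) (a b) (S S') :
    F dX dA I w a b (S - S') = F dX dA I w a b S - F dX dA I w a b S' := by
  simp [F, Matrix.sub_apply, mul_sub, Finset.sum_sub_distrib]

lemma decomp (dX dA : Fin N → ℕ) (I : Finset (Fin N))
    (w : ∀ i, Matrix (Fin (dX i)) (Fin (dX i)) ℂ)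
    (a b : (i : {m // m ∈ I}) → Fin (dA i.1))
    (S : Matrix (BigIx dX dA) (BigIx dX dA) ℂ)
    (k : Fin N) (hk : (dX k : ℂ) ≠ 0) :
    F dX dA I w a b S
      = (dX k : ℂ)⁻¹ * ∑ x : PiIx dX, ∑ t : Fin (dX k),
          ((dX k : ℂ)⁻¹ * ∑ y : PiIx dX,
            ∑ c : (j : {m // m ∉ I}) → Fin (dA j.1), ∑ s : Fin (dX k),
              w k s t * ((∏ i ∈ Finset.univ.erase k, w i (y i) (x i)) *
                S (Function.update y k s, ins I a c) (Function.update x k t, ins I b c))) := by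
  unfold F
  rw [resum dX k hk]
  congr 1
  refine Finset.sum_congr rfl fun x _ => Finset.sum_congr rfl fun t _ => ?_
  rw [resum dX k hk]
  congr 1
  refine Finset.sum_congr rfl fun y _ => ?_
  rw [Finset.sum_comm]
  refine Finset.sum_congr rfl fun c _ => Finset.sum_congr rfl fun s _ => ?_
  rw [← Finset.mul_prod_erase Finset.univ
    (fun i => w i (Function.update y k s i) (Function.update x k t i)) (Finset.mem_univ k)]
  rw [Function.update_self, Function.update_self, mul_assoc]
  congr 2
  refine Finset.prod_congr rfl fun i hi => ?_
  rw [Function.update_of_ne (Finset.ne_of_mem_erase hi),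
    Function.update_of_ne (Finset.ne_of_mem_erase hi)]
lemma ins_update {d : Fin N → ℕ} (I : Finset (Fin N)) (k : Fin N) (hk : k ∉ I)
    (a : (i : {m // m ∈ I}) → Fin (d i.1)) (c : (j : {m // m ∉ I}) → Fin (d j.1))
    (z : Fin (d k)) :
    Function.update (ins I a c) k z = ins I a (Function.update c ⟨k, hk⟩ z) := by
  funext i
  by_cases hi : i = k
  · subst hi
    simp [ins, hk]
  · rw [Function.update_of_ne hi]
    unfold ins
    by_cases h2 : i ∈ I
    · simp [h2]
    · rw [dif_neg h2, dif_neg h2,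
        Function.update_of_ne (fun hcon => hi (congrArg Subtype.val hcon))]

lemma ins_apply_notmem {d : Fin N → ℕ} (I : Finset (Fin N)) (k : Fin N) (hk : k ∉ I)
    (a : (i : {m // m ∈ I}) → Fin (d i.1)) (c : (j : {m // m ∉ I}) → Fin (d j.1)) :
    ins I a c k = c ⟨k, hk⟩ := by
  simp [ins, hk]

lemma FA (dX dA : Fin N → ℕ) (I : Finset (Fin N))
    (w : ∀ i, Matrix (Fin (dX i)) (Fin (dX i)) ℂ)
    (a b : (i : {m // m ∈ I}) → Fin (dA i.1))
    (S : Matrix (BigIx dX dA) (BigIx dX dA) ℂ)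
    (k : Fin N) (hk : k ∉ I) :
    F dX dA I w a b (depolA dX dA k S) = F dX dA I w a b S := by
  by_cases h0 : dA k = 0
  · haveI : IsEmpty ((j : {m // m ∉ I}) → Fin (dA j.1)) :=
      ⟨fun c => Fin.elim0 (Fin.cast h0 (c ⟨k, hk⟩))⟩
    simp [F, Finset.univ_eq_empty]
  · have hd : (dA k : ℂ) ≠ 0 := Nat.cast_ne_zero.mpr h0
    unfold F
    refine Finset.sum_congr rfl fun x _ => Finset.sum_congr rfl fun y _ => ?_
    calc ∑ c : (j : {m // m ∉ I}) → Fin (dA j.1),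
          (∏ i, w i (y i) (x i)) * depolA dX dA k S (y, ins I a c) (x, ins I b c)
        = ∑ c : (j : {m // m ∉ I}) → Fin (dA j.1),
            (∏ i, w i (y i) (x i)) * ((dA k : ℂ)⁻¹ *
              ∑ z : Fin (dA k),
                S (y, ins I a (Function.update c ⟨k, hk⟩ z))
                  (x, ins I b (Function.update c ⟨k, hk⟩ z))) := by
          refine Finset.sum_congr rfl fun c _ => ?_
          simp only [depolA, Matrix.of_apply, ins_apply_notmem I k hk, eq_self_iff_true, if_true,
            ins_update I k hk]
      _ = (∏ i, w i (y i) (x i)) * ((dA k : ℂ)⁻¹ *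
            ∑ c : (j : {m // m ∉ I}) → Fin (dA j.1), ∑ z : Fin (dA k),
              S (y, ins I a (Function.update c ⟨k, hk⟩ z))
                (x, ins I b (Function.update c ⟨k, hk⟩ z))) := by
          rw [← Finset.mul_sum]
          congr 1
          rw [← Finset.mul_sum]
      _ = ∑ c : (j : {m // m ∉ I}) → Fin (dA j.1),
            (∏ i, w i (y i) (x i)) * S (y, ins I a c) (x, ins I b c) := by
          rw [sum_update_general (⟨k, hk⟩ : {m // m ∉ I})
            (fun c => S (y, ins I a c) (x, ins I b c)), Fintype.card_fin,
            ← mul_assoc (dA k : ℂ)⁻¹, inv_mul_cancel₀ hd, one_mul, Finset.mul_sum]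
set_option maxHeartbeats 1000000 in
lemma transfer (dX dA : Fin N → ℕ) (I : Finset (Fin N))
    (w : ∀ i, Matrix (Fin (dX i)) (Fin (dX i)) ℂ)
    (a b : (i : {m // m ∈ I}) → Fin (dA i.1))
    (S : Matrix (BigIx dX dA) (BigIx dX dA) ℂ)
    (k : Fin N) (hk : (dX k : ℂ) ≠ 0) :
    F dX dA I w a b (depolX dX dA k S)
      = F dX dA I (Function.update w k
          (((∑ t : Fin (dX k), w k t t) * (dX k : ℂ)⁻¹) • 1)) a b S := by
  rw [decomp dX dA I w a b _ k hk, decomp dX dA I _ a b S k hk]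
  congr 1
  refine Finset.sum_congr rfl fun x _ => ?_
  have hP : ∀ y : PiIx dX,
      (∏ i ∈ Finset.univ.erase k,
        (Function.update w k (((∑ t : Fin (dX k), w k t t) * (dX k : ℂ)⁻¹) • 1)) i
          (y i) (x i))
        = ∏ i ∈ Finset.univ.erase k, w i (y i) (x i) := fun y =>
    Finset.prod_congr rfl fun i hi => by
      rw [Function.update_of_ne (Finset.ne_of_mem_erase hi)]
  trans ((∑ t : Fin (dX k), w k t t) *
      ∑ y : PiIx dX, ∑ c : (j : {m // m ∉ I}) → Fin (dA j.1),
        (dX k : ℂ)⁻¹ * ((dX k : ℂ)⁻¹ *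
          ((∏ i ∈ Finset.univ.erase k, w i (y i) (x i)) *
            ∑ z : Fin (dX k),
              S (Function.update y k z, ins I a c) (Function.update x k z, ins I b c))))
  · -- LHS = T0
    rw [Finset.sum_mul]
    refine Finset.sum_congr rfl fun t _ => ?_
    simp only [depolX, Matrix.of_apply, Function.update_self, Function.update_idem,
      mul_ite, mul_zero, ite_mul, zero_mul, Finset.sum_ite_eq', Finset.mem_univ, if_true]
    rw [Finset.mul_sum, Finset.mul_sum]
    refine Finset.sum_congr rfl fun y _ => ?_
    rw [Finset.mul_sum, Finset.mul_sum]
    refine Finset.sum_congr rfl fun c _ => ?_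
    ring
  · -- T0 = RHS
    symm
    calc ∑ t : Fin (dX k), ((dX k : ℂ)⁻¹ *
          ∑ y : PiIx dX, ∑ c : (j : {m // m ∉ I}) → Fin (dA j.1), ∑ s : Fin (dX k),
            (Function.update w k (((∑ t : Fin (dX k), w k t t) * (dX k : ℂ)⁻¹) • 1)) k s t *
              ((∏ i ∈ Finset.univ.erase k,
                (Function.update w k (((∑ t : Fin (dX k), w k t t) * (dX k : ℂ)⁻¹) • 1)) i
                  (y i) (x i)) *
                S (Function.update y k s, ins I a c) (Function.update x k t, ins I b c)))
        = ∑ t : Fin (dX k), ∑ y : PiIx dX, ∑ c : (j : {m // m ∉ I}) → Fin (dA j.1),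
            (dX k : ℂ)⁻¹ * (((∑ t' : Fin (dX k), w k t' t') * (dX k : ℂ)⁻¹) *
              ((∏ i ∈ Finset.univ.erase k, w i (y i) (x i)) *
                S (Function.update y k t, ins I a c) (Function.update x k t, ins I b c))) := by
          refine Finset.sum_congr rfl fun t _ => ?_
          simp only [Function.update_self, Matrix.smul_apply, Matrix.one_apply,
            smul_eq_mul, mul_ite, mul_one, mul_zero, ite_mul, zero_mul, one_mul,
            Finset.sum_ite_eq', Finset.mem_univ, if_true]
          rw [Finset.mul_sum]
          refine Finset.sum_congr rfl fun y _ => ?_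
          rw [Finset.mul_sum]
          refine Finset.sum_congr rfl fun c _ => ?_
          rw [hP y]
      _ = ∑ y : PiIx dX, ∑ c : (j : {m // m ∉ I}) → Fin (dA j.1), ∑ t : Fin (dX k),
            (dX k : ℂ)⁻¹ * (((∑ t' : Fin (dX k), w k t' t') * (dX k : ℂ)⁻¹) *
              ((∏ i ∈ Finset.univ.erase k, w i (y i) (x i)) *
                S (Function.update y k t, ins I a c) (Function.update x k t, ins I b c))) := by
          rw [Finset.sum_comm]
          exact Finset.sum_congr rfl fun y _ => Finset.sum_comm
      _ = (∑ t : Fin (dX k), w k t t) *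
            ∑ y : PiIx dX, ∑ c : (j : {m // m ∉ I}) → Fin (dA j.1),
              (dX k : ℂ)⁻¹ * ((dX k : ℂ)⁻¹ *
                ((∏ i ∈ Finset.univ.erase k, w i (y i) (x i)) *
                  ∑ z : Fin (dX k),
                    S (Function.update y k z, ins I a c)
                      (Function.update x k z, ins I b c))) := by
          rw [Finset.mul_sum]
          refine Finset.sum_congr rfl fun y _ => ?_
          rw [Finset.mul_sum]
          refine Finset.sum_congr rfl fun c _ => ?_
          rw [← Finset.mul_sum, ← Finset.mul_sum, ← Finset.mul_sum, Finset.mul_sum]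
          ring
lemma F_wzero (dX dA : Fin N → ℕ) (I : Finset (Fin N))
    (w : ∀ i, Matrix (Fin (dX i)) (Fin (dX i)) ℂ)
    (a b : (i : {m // m ∈ I}) → Fin (dA i.1))
    (S : Matrix (BigIx dX dA) (BigIx dX dA) ℂ)
    (k : Fin N) (hw : w k = 0) :
    F dX dA I w a b S = 0 := by
  unfold F
  refine Finset.sum_eq_zero fun x _ => Finset.sum_eq_zero fun y _ =>
    Finset.sum_eq_zero fun c _ => ?_
  rw [← Finset.mul_prod_erase Finset.univ (fun i => w i (y i) (x i)) (Finset.mem_univ k),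
    hw]
  simp

lemma FX_traceless (dX dA : Fin N → ℕ) (I : Finset (Fin N))
    (w : ∀ i, Matrix (Fin (dX i)) (Fin (dX i)) ℂ)
    (a b : (i : {m // m ∈ I}) → Fin (dA i.1))
    (S : Matrix (BigIx dX dA) (BigIx dX dA) ℂ)
    (k : Fin N) (hk : (dX k : ℂ) ≠ 0) (htr : ∑ t : Fin (dX k), w k t t = 0) :
    F dX dA I w a b (depolX dX dA k S) = 0 := by
  rw [transfer dX dA I w a b S k hk]
  refine F_wzero dX dA I _ a b S k ?_
  rw [Function.update_self, htr, zero_mul, zero_smul]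

lemma FX_unif (dX dA : Fin N → ℕ) (I : Finset (Fin N))
    (w : ∀ i, Matrix (Fin (dX i)) (Fin (dX i)) ℂ)
    (a b : (i : {m // m ∈ I}) → Fin (dA i.1))
    (S : Matrix (BigIx dX dA) (BigIx dX dA) ℂ)
    (k : Fin N) (hk : (dX k : ℂ) ≠ 0)
    (hw : w k = ((dX k : ℂ)⁻¹ • 1)) :
    F dX dA I w a b (depolX dX dA k S) = F dX dA I w a b S := by
  rw [transfer dX dA I w a b S k hk]
  have h2 : (∑ t : Fin (dX k), w k t t) = 1 := by
    rw [hw]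
    simp only [Matrix.smul_apply, Matrix.one_apply_eq, smul_eq_mul, mul_one,
      Finset.sum_const, Finset.card_univ, Fintype.card_fin, nsmul_eq_mul]
    exact mul_inv_cancel₀ hk
  rw [h2, one_mul, ← hw, Function.update_eq_self]

lemma F_foldA (dX dA : Fin N → ℕ) (I : Finset (Fin N))
    (w : ∀ i, Matrix (Fin (dX i)) (Fin (dX i)) ℂ)
    (a b : (i : {m // m ∈ I}) → Fin (dA i.1))
    (L : List (Fin N))
    (h : ∀ j ∈ L, j ∉ I ∧ w j = ((dX j : ℂ)⁻¹ • 1) ∧ (dX j : ℂ) ≠ 0)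
    (T : Matrix (BigIx dX dA) (BigIx dX dA) ℂ) :
    F dX dA I w a b
      (((L.map fun j => fun S' => depolA dX dA j (depolX dX dA j S')).foldr (· ∘ ·) id) T)
      = F dX dA I w a b T := by
  induction L with
  | nil => simp
  | cons j L ih =>
    simp only [List.map_cons, List.foldr_cons, Function.comp_apply]
    obtain ⟨h1, h2, h3⟩ := h j List.mem_cons_self
    rw [FA dX dA I w a b _ j h1, FX_unif dX dA I w a b _ j h3 h2,
      ih (fun j' hj' => h j' (List.mem_cons_of_mem _ hj'))]

lemma F_foldX (dX dA : Fin N → ℕ) (I : Finset (Fin N))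
    (w : ∀ i, Matrix (Fin (dX i)) (Fin (dX i)) ℂ)
    (a b : (i : {m // m ∈ I}) → Fin (dA i.1))
    (L : List (Fin N))
    (h : ∀ i ∈ L, (dX i : ℂ) ≠ 0 ∧ ∑ t : Fin (dX i), w i t t = 0)
    (T : Matrix (BigIx dX dA) (BigIx dX dA) ℂ) :
    F dX dA I w a b
      (((L.map fun i => fun S' => S' - depolX dX dA i S').foldr (· ∘ ·) id) T)
      = F dX dA I w a b T := by
  induction L with
  | nil => simp
  | cons i L ih =>
    simp only [List.map_cons, List.foldr_cons, Function.comp_apply]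
    obtain ⟨h1, h2⟩ := h i List.mem_cons_self
    rw [F_sub, FX_traceless dX dA I w a b _ i h1 h2, sub_zero,
      ih (fun i' hi' => h i' (List.mem_cons_of_mem _ hi'))]

lemma F_main (dX dA : Fin N → ℕ) (I : Finset (Fin N))
    (w : ∀ i, Matrix (Fin (dX i)) (Fin (dX i)) ℂ)
    (a b : (i : {m // m ∈ I}) → Fin (dA i.1))
    (S : Matrix (BigIx dX dA) (BigIx dX dA) ℂ)
    (J : Finset (Fin N)) (hIJ : I ⊆ J) (hJ : J.Nonempty)
    (htr : ∀ i ∈ J, ∑ t : Fin (dX i), w i t t = 0)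
    (hun : ∀ i ∉ J, w i = ((dX i : ℂ)⁻¹ • 1))
    (hd : ∀ i, (dX i : ℂ) ≠ 0)
    (hS : ProcessConditions dX dA S) :
    F dX dA I w a b S = 0 := by
  have h0 := hS J hJ
  have h1 : F dX dA I w a b
      (((J.toList.map fun i => fun S' => S' - depolX dX dA i S').foldr (· ∘ ·) id)
        (((Jᶜ.toList.map fun j => fun S' => depolA dX dA j (depolX dX dA j S')).foldr
          (· ∘ ·) id) S)) = 0 := by
    rw [h0]; exact F_zero dX dA I w a b
  rw [F_foldX dX dA I w a b J.toList
      (fun i hi => ⟨hd i, htr i (Finset.mem_toList.mp hi)⟩),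
    F_foldA dX dA I w a b Jᶜ.toList
      (fun j hj => by
        have hj' : j ∉ J := Finset.mem_compl.mp (Finset.mem_toList.mp hj)
        exact ⟨fun hjI => hj' (hIJ hjI), hun j hj', hd j⟩)] at h1
  exact h1
lemma chan_apply {ι κ : Type*} [Fintype ι] [Fintype κ] [DecidableEq κ]
    (S : Matrix (ι × κ) (ι × κ) ℂ) (ρ : Matrix ι ι ℂ) (u v : κ) :
    chan S ρ u v = ∑ x : ι, ∑ y : ι, ρ y x * S (y, u) (x, v) := by
  unfold chan
  rw [Matrix.of_apply]
  refine Finset.sum_congr rfl fun x _ => ?_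
  rw [Matrix.mul_apply]
  rw [Fintype.sum_prod_type (f := fun j : ι × κ =>
    (Matrix.of fun p q : ι × κ => ρ.transpose p.1 q.1 * (if p.2 = q.2 then (1 : ℂ) else 0))
      (x, u) j * S j (x, v))]
  refine Finset.sum_congr rfl fun y _ => ?_
  simp [Matrix.of_apply, Matrix.transpose_apply, ite_mul, mul_ite, one_mul, zero_mul,
    mul_zero, Finset.sum_ite_eq, Finset.mem_univ, if_true, mul_assoc]

/-- The weight family indexed by a subset `K ⊆ Iᶜ`. -/
noncomputable def wK (dX : Fin N → ℕ)
    (ρ : (i : Fin N) → Fin 2 → Matrix (Fin (dX i)) (Fin (dX i)) ℂ)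
    (σ : (i : Fin N) → Matrix (Fin (dX i)) (Fin (dX i)) ℂ)
    (I K : Finset (Fin N)) : ∀ i, Matrix (Fin (dX i)) (Fin (dX i)) ℂ := fun i =>
  if i ∈ I then ρ i 0 - ρ i 1
  else if i ∈ K then σ i - ((dX i : ℂ)⁻¹ • 1)
  else ((dX i : ℂ)⁻¹ • 1)
/-- if `S` satisfies the process conditions (3), then the induced map
`T(ρ) = Tr_X[(ρ^T ⊗ I) S]` is parity-erasure. -/
theorem statement_1 {N : ℕ} (dX dA : Fin N → ℕ)
    (S : Matrix (BigIx dX dA) (BigIx dX dA) ℂ)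
    (hS : ProcessConditions dX dA S) :
    IsParityErasure dX dA (chan S) := by
  intro I hI ρ σ hρ hσ
  have hd : ∀ i, (dX i : ℂ) ≠ 0 := by
    intro i
    rw [Nat.cast_ne_zero]
    intro h0
    have h1 := (hσ i).2
    haveI : IsEmpty (Fin (dX i)) := by rw [h0]; infer_instance
    rw [Matrix.trace] at h1
    simp only [Finset.univ_eq_empty, Finset.sum_empty] at h1
    exact zero_ne_one h1
  ext a b
  rw [Matrix.zero_apply]
  have hA : ptraceOut I (chan S (Matrix.of fun x y =>
        (∏ i ∈ I, (ρ i 0 - ρ i 1) (x i) (y i)) * ∏ j ∈ Iᶜ, σ j (x j) (y j))) a b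
      = ∑ c : (j : {m // m ∉ I}) → Fin (dA j.1), ∑ x : PiIx dX, ∑ y : PiIx dX,
          ((∏ i ∈ I, (ρ i 0 - ρ i 1) (y i) (x i)) * ∏ j ∈ Iᶜ, σ j (y j) (x j)) *
            S (y, ins I a c) (x, ins I b c) := by
    unfold ptraceOut
    rw [Matrix.of_apply]
    refine Finset.sum_congr rfl fun c _ => ?_
    exact chan_apply S _ _ _
  rw [hA, Finset.sum_comm]
  have hB : ∀ x : PiIx dX, ∑ c : (j : {m // m ∉ I}) → Fin (dA j.1), ∑ y : PiIx dX,
        ((∏ i ∈ I, (ρ i 0 - ρ i 1) (y i) (x i)) * ∏ j ∈ Iᶜ, σ j (y j) (x j)) *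
          S (y, ins I a c) (x, ins I b c)
      = ∑ y : PiIx dX, ∑ c : (j : {m // m ∉ I}) → Fin (dA j.1),
        ((∏ i ∈ I, (ρ i 0 - ρ i 1) (y i) (x i)) * ∏ j ∈ Iᶜ, σ j (y j) (x j)) *
          S (y, ins I a c) (x, ins I b c) := fun x => Finset.sum_comm
  rw [Finset.sum_congr rfl fun x _ => hB x]
  -- expansion of the weight product
  have hexp : ∀ x y : PiIx dX,
      ((∏ i ∈ I, (ρ i 0 - ρ i 1) (y i) (x i)) * ∏ j ∈ Iᶜ, σ j (y j) (x j))
        = ∑ K ∈ Iᶜ.powerset, ∏ i, wK dX ρ σ I K i (y i) (x i) := by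
    intro x y
    have h1 : ∏ j ∈ Iᶜ, σ j (y j) (x j)
        = ∑ K ∈ Iᶜ.powerset,
            (∏ j ∈ K, (σ j - ((dX j : ℂ)⁻¹ • 1)) (y j) (x j)) *
              ∏ j ∈ Iᶜ \ K, ((dX j : ℂ)⁻¹ •
                (1 : Matrix (Fin (dX j)) (Fin (dX j)) ℂ)) (y j) (x j) := by
      rw [← Finset.prod_add]
      refine Finset.prod_congr rfl fun j _ => ?_
      simp only [Matrix.sub_apply]
      ring
    rw [h1, Finset.mul_sum]
    refine Finset.sum_congr rfl fun K hK => ?_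
    have hKc := Finset.mem_powerset.mp hK
    rw [← Finset.prod_mul_prod_compl I (fun i => wK dX ρ σ I K i (y i) (x i))]
    have e1 : ∏ i ∈ I, wK dX ρ σ I K i (y i) (x i)
        = ∏ i ∈ I, (ρ i 0 - ρ i 1) (y i) (x i) :=
      Finset.prod_congr rfl fun i hi => by simp only [wK]; rw [if_pos hi]
    have e2 : ∏ i ∈ Iᶜ, wK dX ρ σ I K i (y i) (x i)
        = (∏ i ∈ Iᶜ \ K, ((dX i : ℂ)⁻¹ •
              (1 : Matrix (Fin (dX i)) (Fin (dX i)) ℂ)) (y i) (x i)) *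
            ∏ i ∈ K, (σ i - ((dX i : ℂ)⁻¹ • 1)) (y i) (x i) := by
      rw [← Finset.prod_sdiff hKc]
      congr 1
      · refine Finset.prod_congr rfl fun i hi => ?_
        obtain ⟨hiIc, hiK⟩ := Finset.mem_sdiff.mp hi
        simp only [wK]
        rw [if_neg (Finset.mem_compl.mp hiIc), if_neg hiK]
      · refine Finset.prod_congr rfl fun i hi => ?_
        simp only [wK]
        rw [if_neg (Finset.mem_compl.mp (hKc hi)), if_pos hi]
    rw [e1, e2]
    ring
  rw [Finset.sum_congr rfl fun x _ => Finset.sum_congr rfl fun y _ =>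
    Finset.sum_congr rfl fun c _ => by rw [hexp x y, Finset.sum_mul]]
  -- pull the K-sum out
  have hC : ∑ x : PiIx dX, ∑ y : PiIx dX, ∑ c : (j : {m // m ∉ I}) → Fin (dA j.1),
        ∑ K ∈ Iᶜ.powerset, (∏ i, wK dX ρ σ I K i (y i) (x i)) *
          S (y, ins I a c) (x, ins I b c)
      = ∑ K ∈ Iᶜ.powerset, F dX dA I (wK dX ρ σ I K) a b S := by
    trans (∑ x : PiIx dX, ∑ K ∈ Iᶜ.powerset, ∑ y : PiIx dX,
        ∑ c : (j : {m // m ∉ I}) → Fin (dA j.1),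
          (∏ i, wK dX ρ σ I K i (y i) (x i)) * S (y, ins I a c) (x, ins I b c))
    · refine Finset.sum_congr rfl fun x _ => ?_
      trans (∑ y : PiIx dX, ∑ K ∈ Iᶜ.powerset,
          ∑ c : (j : {m // m ∉ I}) → Fin (dA j.1),
            (∏ i, wK dX ρ σ I K i (y i) (x i)) * S (y, ins I a c) (x, ins I b c))
      · exact Finset.sum_congr rfl fun y _ => Finset.sum_comm
      · exact Finset.sum_comm
    · rw [Finset.sum_comm]
      exact Finset.sum_congr rfl fun K _ => rfl
  rw [hC]
  -- each term vanishes
  refine Finset.sum_eq_zero fun K hK => ?_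
  have hKc := Finset.mem_powerset.mp hK
  refine F_main dX dA I (wK dX ρ σ I K) a b S (I ∪ K) Finset.subset_union_left
    (hI.mono Finset.subset_union_left) ?_ ?_ hd hS
  · intro i hi
    have htr : ∀ (A : Matrix (Fin (dX i)) (Fin (dX i)) ℂ), A.trace = ∑ t, A t t :=
      fun A => rfl
    rcases Finset.mem_union.mp hi with hiI | hiK
    · rw [← htr]
      simp only [wK]
      rw [if_pos hiI, Matrix.trace_sub, (hρ i 0).2, (hρ i 1).2, sub_self]
    · have hiI : i ∉ I := Finset.mem_compl.mp (hKc hiK)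
      rw [← htr]
      simp only [wK]
      rw [if_neg hiI, if_pos hiK, Matrix.trace_sub, (hσ i).2, Matrix.trace_smul,
        Matrix.trace_one, smul_eq_mul, Fintype.card_fin, inv_mul_cancel₀ (hd i), sub_self]
  · intro i hi
    have hiI : i ∉ I := fun h => hi (Finset.mem_union_left _ h)
    have hiK : i ∉ K := fun h => hi (Finset.mem_union_right _ h)
    simp only [wK]
    rw [if_neg hiI, if_neg hiK]

end ParityErasurePaper
end

section
/- Let Φ be a linear map from d×d complex matrices to d'×d' complex matrices that maps Hermitian matrices to Hermitian matrices and is trace-preserving (Tr Φ(ρ) = Tr ρ for all ρ), and let π be any d'×d' density matrix. Then there exist a finite index set J, real coefficients c_j, operators E_j with 0 ≤ E_j ≤ I_d, and d'×d' density matrices σ_j (j ∈ J) such that Φ(ρ) = Tr(ρ)·π + Σ_{j∈J} c_j · Tr(E_j ρ) · (σ_j − π) for all d×d matrices ρ. -/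
open scoped BigOperators ComplexOrder

namespace ParityErasurePaper

open Matrix

section Helpers
variable {d : ℕ}

private lemma vecMulVec_mulVec' (v w x : Fin d → ℂ) :
    vecMulVec v w *ᵥ x = (w ⬝ᵥ x) • v := by
  ext i
  simp [vecMulVec_apply, mulVec, dotProduct, Finset.mul_sum, mul_comm, mul_assoc, mul_left_comm]

private lemma outer_posSemidef (v : Fin d → ℂ) : (vecMulVec v (star v)).PosSemidef := by
  refine posSemidef_iff_dotProduct_mulVec.mpr ⟨?_, ?_⟩
  · ext a b
    simp [conjTranspose_apply, vecMulVec_apply, mul_comm]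
  · intro x
    rw [vecMulVec_mulVec']
    have h1 : star x ⬝ᵥ (star v ⬝ᵥ x) • v = (star v ⬝ᵥ x) * (star x ⬝ᵥ v) := by
      simp [dotProduct_smul, mul_comm]
    have h2 : star x ⬝ᵥ v = star (star v ⬝ᵥ x) := by
      simp [dotProduct, star_sum, mul_comm]
    rw [h1, h2]
    exact mul_star_self_nonneg _

private lemma outer_trace_mul (v : Fin d → ℂ) (ρ : Matrix (Fin d) (Fin d) ℂ) :
    (vecMulVec v (star v) * ρ).trace = star v ⬝ᵥ ρ *ᵥ v := by
  simp only [trace, diag, mul_apply, vecMulVec_apply, dotProduct, mulVec, Pi.star_apply]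
  rw [Finset.sum_comm]
  congr 1; ext b
  simp [Finset.mul_sum, dotProduct]
  congr 1; ext a
  ring

private lemma posSemidef_smul_real {M : Matrix (Fin d) (Fin d) ℂ} (hM : M.PosSemidef)
    {c : ℝ} (hc : 0 ≤ c) : ((c : ℂ) • M).PosSemidef := by
  refine posSemidef_iff_dotProduct_mulVec.mpr ⟨?_, ?_⟩
  · ext a b
    simp [conjTranspose_apply, hM.1.apply]
  · intro x
    rw [smul_mulVec, dotProduct_smul]
    exact mul_nonneg (by exact_mod_cast Complex.zero_le_real.mpr hc) (hM.dotProduct_mulVec_nonneg x)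

/-- the phase used in the effect attached to an ordered pair -/
private def effMu (k l : Fin d) : ℂ := if k < l then 1 else Complex.I

private lemma effMu_mul_conj (k l : Fin d) : effMu k l * star (effMu k l) = 1 := by
  unfold effMu; split <;> simp

/-- vector whose outer product (halved) is the effect for an off-diagonal pair -/
private def effVec (k l : Fin d) : Fin d → ℂ := Pi.single k 1 + Pi.single l (effMu k l)

/-- the family of effects indexed by pairs -/
private noncomputable def eff (k l : Fin d) : Matrix (Fin d) (Fin d) ℂ :=
  if k = l then vecMulVec (Pi.single k 1) (star (Pi.single k 1))
  else ((2⁻¹ : ℝ) : ℂ) • vecMulVec (effVec k l) (star (effVec k l))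

private lemma eff_posSemidef (k l : Fin d) : (eff k l).PosSemidef := by
  unfold eff
  split
  · exact outer_posSemidef _
  · exact posSemidef_smul_real (outer_posSemidef _) (by norm_num : (0:ℝ) ≤ 2⁻¹)

private lemma one_sub_eff_posSemidef (k l : Fin d) :
    ((1 : Matrix (Fin d) (Fin d) ℂ) - eff k l).PosSemidef := by
  unfold eff
  split
  · have heq : (1 : Matrix (Fin d) (Fin d) ℂ)
        - vecMulVec (Pi.single k 1) (star (Pi.single k (1:ℂ)))
        = diagonal (fun a => if a = k then 0 else 1) := by
      ext a b
      by_cases h1 : a = b <;> by_cases h2 : a = k <;> by_cases h3 : b = k <;>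
        simp_all [vecMulVec_apply, Pi.single_apply, one_apply, diagonal_apply]
    rw [heq]
    refine PosSemidef.diagonal fun a => ?_
    split <;> norm_num
  · rename_i hkl
    have hμ := effMu_mul_conj k l
    have heq : (1 : Matrix (Fin d) (Fin d) ℂ)
        - ((2⁻¹ : ℝ) : ℂ) • vecMulVec (effVec k l) (star (effVec k l))
        = diagonal (fun a => if a = k ∨ a = l then 0 else 1)
          + ((2⁻¹ : ℝ) : ℂ) • vecMulVec (Pi.single k 1 - Pi.single l (effMu k l))
              (star (Pi.single k 1 - Pi.single l (effMu k l))) := by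
      ext a b
      by_cases h1 : a = b <;> by_cases h2 : a = k <;> by_cases h3 : b = k <;>
        by_cases h4 : a = l <;> by_cases h5 : b = l <;>
        simp_all [effVec, vecMulVec_apply, Pi.single_apply, one_apply, diagonal_apply] <;>
        ring_nf
    rw [heq]
    refine PosSemidef.add ?_ (posSemidef_smul_real (outer_posSemidef _) (by norm_num : (0:ℝ) ≤ 2⁻¹))
    refine PosSemidef.diagonal fun a => ?_
    split <;> norm_num

private lemma eff_trace_diag (k : Fin d) (ρ : Matrix (Fin d) (Fin d) ℂ) :
    (eff k k * ρ).trace = ρ k k := by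
  rw [eff, if_pos rfl, outer_trace_mul]
  simp [dotProduct, mulVec, Pi.single_apply, apply_ite (starRingEnd ℂ), Finset.sum_ite_eq']

private lemma eff_trace_off (k l : Fin d) (hkl : k ≠ l) (ρ : Matrix (Fin d) (Fin d) ℂ) :
    (eff k l * ρ).trace
      = (2:ℂ)⁻¹ * (ρ k k + effMu k l * ρ k l + star (effMu k l) * ρ l k + ρ l l) := by
  rw [eff, if_neg hkl, smul_mul_assoc, trace_smul, outer_trace_mul]
  have : star (effVec k l) ⬝ᵥ ρ *ᵥ effVec k l
      = ρ k k + effMu k l * ρ k l + star (effMu k l) * ρ l k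
        + star (effMu k l) * effMu k l * ρ l l := by
    unfold effVec
    simp [dotProduct, mulVec, Pi.single_apply, Finset.sum_add_distrib, mul_add, add_mul,
      apply_ite (starRingEnd ℂ), Finset.sum_ite_eq', star_add]
    ring
  rw [this]
  have hμ := effMu_mul_conj k l
  rw [mul_comm (star (effMu k l)) (effMu k l)] at this ⊢
  rw [hμ]
  simp only [smul_eq_mul]
  push_cast
  ring

/-- the linear map sending `ρ` to the collection of effect-expectations -/
private noncomputable def effL (d : ℕ) :
    Matrix (Fin d) (Fin d) ℂ →ₗ[ℂ] (Fin d × Fin d → ℂ) where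
  toFun ρ := fun p => (eff p.1 p.2 * ρ).trace
  map_add' x y := by ext p; simp [mul_add]
  map_smul' c x := by ext p; simp [mul_smul_comm]

private lemma effL_ker (d : ℕ) : LinearMap.ker (effL d) = ⊥ := by
  rw [LinearMap.ker_eq_bot']
  intro ρ hρ
  have h : ∀ k l : Fin d, (eff k l * ρ).trace = 0 := by
    intro k l
    exact congrFun hρ (k, l)
  have hdiag : ∀ k : Fin d, ρ k k = 0 := by
    intro k
    have := h k k
    rwa [eff_trace_diag] at this
  ext a b
  by_cases hab : a = b
  · subst hab; simp [hdiag a]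
  · have e1 := h a b
    have e2 := h b a
    rw [eff_trace_off a b hab ρ, hdiag a, hdiag b] at e1
    rw [eff_trace_off b a (Ne.symm hab) ρ, hdiag a, hdiag b] at e2
    rcases lt_or_gt_of_ne hab with hlt | hlt
    · rw [effMu, if_pos hlt] at e1
      rw [effMu, if_neg (asymm hlt)] at e2
      simp only [star_one, Complex.star_def, Complex.conj_I] at e1 e2
      have e1' : ρ a b + ρ b a = 0 := by
        field_simp at e1
        linear_combination e1
      have e2' : Complex.I * ρ b a - Complex.I * ρ a b = 0 := by
        field_simp at e2
        linear_combination e2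
      have e3 : ρ b a - ρ a b = 0 := by
        have hz : Complex.I * (ρ b a - ρ a b) = 0 := by linear_combination e2'
        exact (mul_eq_zero.mp hz).resolve_left Complex.I_ne_zero
      simp only [Matrix.zero_apply]
      linear_combination (1/2 : ℂ) * e1' - (1/2 : ℂ) * e3
    · rw [effMu, if_neg (asymm hlt)] at e1
      rw [effMu, if_pos hlt] at e2
      simp only [star_one, Complex.star_def, Complex.conj_I] at e1 e2
      have e1' : Complex.I * ρ a b - Complex.I * ρ b a = 0 := by
        field_simp at e1
        linear_combination e1
      have e2' : ρ b a + ρ a b = 0 := by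
        field_simp at e2
        linear_combination e2
      have e3 : ρ a b - ρ b a = 0 := by
        have hz : Complex.I * (ρ a b - ρ b a) = 0 := by linear_combination e1'
        exact (mul_eq_zero.mp hz).resolve_left Complex.I_ne_zero
      simp only [Matrix.zero_apply]
      linear_combination (1/2 : ℂ) * e2' + (1/2 : ℂ) * e3

/-- spectral decomposition of a Hermitian matrix as a sum of scaled rank-one outer products -/
private lemma spectral_sum {m : ℕ} {M : Matrix (Fin m) (Fin m) ℂ} (hM : M.IsHermitian) :
    M = ∑ i, (RCLike.ofReal (hM.eigenvalues i) : ℂ) •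
      vecMulVec (fun a => (hM.eigenvectorUnitary : Matrix (Fin m) (Fin m) ℂ) a i)
        (star fun a => (hM.eigenvectorUnitary : Matrix (Fin m) (Fin m) ℂ) a i) := by
  conv_lhs => rw [hM.spectral_theorem, Unitary.conjStarAlgAut_apply]
  ext a b
  simp only [mul_apply, diagonal_apply, Function.comp_apply, Matrix.sum_apply, Matrix.smul_apply,
    vecMulVec_apply, Pi.star_apply, star_apply, smul_eq_mul, Finset.sum_ite_eq,
    Finset.mem_univ, if_true, ite_mul, zero_mul]
  simp only [mul_ite, mul_zero, Finset.sum_ite_eq', Finset.mem_univ, if_true]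
  refine Finset.sum_congr rfl fun x _ => ?_
  ring

private lemma unitary_col_trace {m : ℕ} {M : Matrix (Fin m) (Fin m) ℂ} (hM : M.IsHermitian)
    (i : Fin m) :
    (vecMulVec (fun a => (hM.eigenvectorUnitary : Matrix (Fin m) (Fin m) ℂ) a i)
        (star fun a => (hM.eigenvectorUnitary : Matrix (Fin m) (Fin m) ℂ) a i)).trace = 1 := by
  have h : (star (hM.eigenvectorUnitary : Matrix (Fin m) (Fin m) ℂ))
      * (hM.eigenvectorUnitary : Matrix (Fin m) (Fin m) ℂ) = 1 := by
    exact Unitary.coe_star_mul_self hM.eigenvectorUnitary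
  have h2 := congrFun (congrFun (congrArg (fun A => (A : Matrix (Fin m) (Fin m) ℂ)) h) i) i
  simp only [mul_apply, star_apply, one_apply_eq] at h2
  simp only [trace, diag, vecMulVec_apply, Pi.star_apply]
  rw [← h2]
  congr 1; ext a
  ring

end Helpers

/-- a Hermitian-preserving, trace-preserving linear map `Φ` from `d×d` to
`d'×d'` matrices decomposes, for any density matrix `π`, as
`Φ(ρ) = Tr(ρ)·π + Σ_j c_j · Tr(E_j ρ) · (σ_j − π)` with real `c_j`, effects `0 ≤ E_j ≤ I`,
and density matrices `σ_j`. -/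
theorem statement_4 (d d' : ℕ)
    (Φ : Matrix (Fin d) (Fin d) ℂ →ₗ[ℂ] Matrix (Fin d') (Fin d') ℂ)
    (hHerm : ∀ ρ : Matrix (Fin d) (Fin d) ℂ, ρ.IsHermitian → (Φ ρ).IsHermitian)
    (hTr : ∀ ρ : Matrix (Fin d) (Fin d) ℂ, (Φ ρ).trace = ρ.trace)
    (π : Matrix (Fin d') (Fin d') ℂ)
    (hπ : π.PosSemidef ∧ π.trace = 1) :
    ∃ (J : ℕ) (c : Fin J → ℝ) (E : Fin J → Matrix (Fin d) (Fin d) ℂ)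
      (σ : Fin J → Matrix (Fin d') (Fin d') ℂ),
      (∀ j, (E j).PosSemidef ∧ ((1 : Matrix (Fin d) (Fin d) ℂ) - E j).PosSemidef) ∧
      (∀ j, (σ j).PosSemidef ∧ (σ j).trace = 1) ∧
      ∀ ρ : Matrix (Fin d) (Fin d) ℂ,
        Φ ρ = ρ.trace • π + ∑ j, (((c j : ℂ)) * (E j * ρ).trace) • (σ j - π) := by
  classical
  -- the shifted map Ψ ρ = Φ ρ - (tr ρ) • π
  set Ψ : Matrix (Fin d) (Fin d) ℂ →ₗ[ℂ] Matrix (Fin d') (Fin d') ℂ :=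
    Φ - (Matrix.traceLinearMap (Fin d) ℂ ℂ).smulRight π with hΨdef
  have hΨ : ∀ ρ, Ψ ρ = Φ ρ - ρ.trace • π := fun ρ => rfl
  -- left inverse of the effect-expectation map
  obtain ⟨g, hg⟩ := (effL d).exists_leftInverse_of_injective (effL_ker d)
  have hgL : ∀ ρ, g (effL d ρ) = ρ := fun ρ => congrArg (fun f => f ρ) hg
  -- raw decomposition Ψ ρ = ∑ (effL ρ n) • B n
  set B : Fin d × Fin d → Matrix (Fin d') (Fin d') ℂ :=
    fun n => Ψ (g (Pi.single n 1)) with hBdef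
  have hdecomp : ∀ ρ, Ψ ρ = ∑ n : Fin d × Fin d, (effL d ρ n) • B n := by
    intro ρ
    have hx : (effL d ρ) = ∑ n : Fin d × Fin d, effL d ρ n • (Pi.single n 1 : Fin d × Fin d → ℂ) := by
      ext m
      simp [Pi.single_apply, Finset.sum_ite_eq', eq_comm]
    conv_lhs => rw [← hgL ρ, hx]
    rw [map_sum, map_sum]
    exact Finset.sum_congr rfl fun n _ => by rw [_root_.map_smul, _root_.map_smul]
  -- Hermitian facts
  have hπH : π.IsHermitian := hπ.1.1
  have heffH : ∀ k l : Fin d, (eff k l).IsHermitian := fun k l => (eff_posSemidef k l).1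
  have hzreal : ∀ ρ : Matrix (Fin d) (Fin d) ℂ, ρ.IsHermitian →
      ∀ n : Fin d × Fin d, star (effL d ρ n) = effL d ρ n := by
    intro ρ hρ n
    show star ((eff n.1 n.2 * ρ).trace) = (eff n.1 n.2 * ρ).trace
    rw [← trace_conjTranspose, conjTranspose_mul, hρ.eq, (heffH n.1 n.2).eq, trace_mul_comm]
  have hΨH : ∀ ρ : Matrix (Fin d) (Fin d) ℂ, ρ.IsHermitian → (Ψ ρ).IsHermitian := by
    intro ρ hρ
    rw [hΨ]
    refine IsHermitian.sub (hHerm ρ hρ) ?_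
    have htρ : star ρ.trace = ρ.trace := by rw [← trace_conjTranspose, hρ.eq]
    show (ρ.trace • π)ᴴ = ρ.trace • π
    rw [conjTranspose_smul, htρ, hπH.eq]
  -- hermitized coefficients
  set B' : Fin d × Fin d → Matrix (Fin d') (Fin d') ℂ :=
    fun n => ((2⁻¹ : ℝ) : ℂ) • (B n + (B n)ᴴ) with hB'def
  have hB'H : ∀ n, (B' n).IsHermitian := by
    intro n
    show (B' n)ᴴ = B' n
    rw [hB'def]
    simp only [conjTranspose_smul, conjTranspose_add, conjTranspose_conjTranspose]
    rw [show star (((2⁻¹:ℝ):ℂ)) = ((2⁻¹:ℝ):ℂ) from by simp, add_comm]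
  -- decomposition with Hermitian coefficients
  have hdecompH : ∀ ρ : Matrix (Fin d) (Fin d) ℂ, ρ.IsHermitian →
      Ψ ρ = ∑ n : Fin d × Fin d, (effL d ρ n) • B' n := by
    intro ρ hρ
    have h1 := hdecomp ρ
    have h2 : Ψ ρ = ∑ n : Fin d × Fin d, (effL d ρ n) • (B n)ᴴ := by
      conv_lhs => rw [← (hΨH ρ hρ).eq, h1]
      rw [conjTranspose_sum]
      refine Finset.sum_congr rfl fun n _ => ?_
      rw [conjTranspose_smul, hzreal ρ hρ n]
    have hterm : ∀ n : Fin d × Fin d, effL d ρ n • B' n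
        = ((2⁻¹:ℝ):ℂ) • (effL d ρ n • B n) + ((2⁻¹:ℝ):ℂ) • (effL d ρ n • (B n)ᴴ) := by
      intro n
      simp only [hB'def, smul_add, smul_comm (effL d ρ n) (((2⁻¹:ℝ):ℂ))]
    rw [show (∑ n : Fin d × Fin d, effL d ρ n • B' n)
        = ((2⁻¹:ℝ):ℂ) • (∑ n : Fin d × Fin d, effL d ρ n • B n)
          + ((2⁻¹:ℝ):ℂ) • (∑ n : Fin d × Fin d, effL d ρ n • (B n)ᴴ) from by
      rw [Finset.smul_sum, Finset.smul_sum, ← Finset.sum_add_distrib]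
      exact Finset.sum_congr rfl fun n _ => hterm n]
    rw [← h1, ← h2, ← add_smul]
    rw [show ((2⁻¹:ℝ):ℂ) + ((2⁻¹:ℝ):ℂ) = 1 from by push_cast; norm_num, one_smul]
  -- extend to all matrices by complex-linearity
  have hdecomp' : ∀ ρ : Matrix (Fin d) (Fin d) ℂ,
      Ψ ρ = ∑ n : Fin d × Fin d, (effL d ρ n) • B' n := by
    intro ρ
    have hH₁ : ((2⁻¹ : ℂ) • (ρ + ρᴴ)).IsHermitian := by
      show _ᴴ = _
      rw [conjTranspose_smul, conjTranspose_add, conjTranspose_conjTranspose, add_comm ρᴴ ρ]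
      congr 1
      simp
    have hH₂ : (((-(Complex.I))/2) • (ρ - ρᴴ)).IsHermitian := by
      show _ᴴ = _
      rw [conjTranspose_smul, conjTranspose_sub, conjTranspose_conjTranspose]
      rw [show star (-(Complex.I)/2) = Complex.I/2 from by simp [Complex.star_def, map_div₀]]
      match_scalars <;> ring
    have hρeq : ρ = (2⁻¹ : ℂ) • (ρ + ρᴴ)
        + Complex.I • (((-(Complex.I))/2) • (ρ - ρᴴ)) := by
      match_scalars
      · linear_combination (1/2 : ℂ) * Complex.I_sq
      · linear_combination (-1/2 : ℂ) * Complex.I_sq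
    have hn : ∀ n : Fin d × Fin d, effL d ρ n
        = effL d ((2⁻¹ : ℂ) • (ρ + ρᴴ)) n
          + Complex.I * effL d (((-(Complex.I))/2) • (ρ - ρᴴ)) n := by
      intro n
      conv_lhs => rw [hρeq]
      rw [map_add, _root_.map_smul]
      simp
      ring
    conv_lhs => rw [hρeq]
    rw [map_add, hdecompH _ hH₁, _root_.map_smul Ψ, hdecompH _ hH₂, Finset.smul_sum,
      ← Finset.sum_add_distrib]
    refine Finset.sum_congr rfl fun n _ => ?_
    rw [hn n, add_smul, mul_smul]
  -- the traces of the B' sum to zero against any ρ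
  have htrB : ∀ ρ : Matrix (Fin d) (Fin d) ℂ,
      ∑ n : Fin d × Fin d, effL d ρ n * (B' n).trace = 0 := by
    intro ρ
    have h0 : (Ψ ρ).trace = 0 := by
      rw [hΨ, trace_sub, trace_smul, hTr, hπ.2, smul_eq_mul, mul_one, sub_self]
    calc ∑ n : Fin d × Fin d, effL d ρ n * (B' n).trace
        = ∑ n : Fin d × Fin d, ((effL d ρ n) • B' n).trace := by
          refine Finset.sum_congr rfl fun n _ => ?_
          conv_rhs => rw [trace_smul]
          rw [smul_eq_mul]
      _ = (∑ n : Fin d × Fin d, (effL d ρ n) • B' n).trace := (trace_sum _ _).symm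
      _ = (Ψ ρ).trace := by rw [← hdecomp' ρ]
      _ = 0 := h0
  -- spectral data of each B'
  set lam : Fin d × Fin d → Fin d' → ℝ := fun n i => (hB'H n).eigenvalues i with hlamdef
  set sig : Fin d × Fin d → Fin d' → Matrix (Fin d') (Fin d') ℂ := fun n i =>
    vecMulVec (fun a => ((hB'H n).eigenvectorUnitary : Matrix (Fin d') (Fin d') ℂ) a i)
      (star fun a => ((hB'H n).eigenvectorUnitary : Matrix (Fin d') (Fin d') ℂ) a i)
    with hsigdef
  have hsig : ∀ n i, (sig n i).PosSemidef ∧ (sig n i).trace = 1 :=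
    fun n i => ⟨outer_posSemidef _, unitary_col_trace (hB'H n) i⟩
  have hspec : ∀ n, B' n = ∑ i, ((lam n i : ℝ) : ℂ) • sig n i :=
    fun n => spectral_sum (hB'H n)
  have htr1 : ∀ n, (B' n).trace = ∑ i, ((lam n i : ℝ) : ℂ) := by
    intro n
    rw [hspec n, trace_sum]
    refine Finset.sum_congr rfl fun i _ => ?_
    rw [trace_smul, (hsig n i).2, smul_eq_mul, mul_one]
  -- assemble the answer
  refine ⟨Fintype.card ((Fin d × Fin d) × Fin d'), ?_⟩
  set e : Fin (Fintype.card ((Fin d × Fin d) × Fin d')) ≃ (Fin d × Fin d) × Fin d' :=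
    (Fintype.equivFin ((Fin d × Fin d) × Fin d')).symm with hedef
  refine ⟨fun j => lam (e j).1 (e j).2, fun j => eff (e j).1.1 (e j).1.2,
    fun j => sig (e j).1 (e j).2, fun j => ⟨eff_posSemidef _ _, one_sub_eff_posSemidef _ _⟩,
    fun j => hsig _ _, ?_⟩
  intro ρ
  have hsum1 : (∑ j, (((lam (e j).1 (e j).2 : ℝ) : ℂ) * (eff (e j).1.1 (e j).1.2 * ρ).trace)
        • (sig (e j).1 (e j).2 - π))
      = ∑ p : (Fin d × Fin d) × Fin d',
          (((lam p.1 p.2 : ℝ) : ℂ) * (eff p.1.1 p.1.2 * ρ).trace) • (sig p.1 p.2 - π) :=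
    Equiv.sum_comp e fun p => (((lam p.1 p.2 : ℝ) : ℂ) * (eff p.1.1 p.1.2 * ρ).trace)
      • (sig p.1 p.2 - π)
  rw [hsum1, Fintype.sum_prod_type]
  have hinner : ∀ n : Fin d × Fin d,
      (∑ i, (((lam n i : ℝ) : ℂ) * (eff n.1 n.2 * ρ).trace) • (sig n i - π))
        = (effL d ρ n) • B' n - (effL d ρ n * (B' n).trace) • π := by
    intro n
    have hz : (eff n.1 n.2 * ρ).trace = effL d ρ n := rfl
    calc (∑ i, (((lam n i : ℝ) : ℂ) * (eff n.1 n.2 * ρ).trace) • (sig n i - π))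
        = (∑ i, (((lam n i : ℝ) : ℂ) * effL d ρ n) • sig n i)
          - (∑ i, (((lam n i : ℝ) : ℂ) * effL d ρ n) • π) := by
          rw [← Finset.sum_sub_distrib]
          exact Finset.sum_congr rfl fun i _ => by rw [hz, smul_sub]
      _ = (effL d ρ n) • B' n - (effL d ρ n * (B' n).trace) • π := by
          congr 1
          · rw [hspec n, Finset.smul_sum]
            refine Finset.sum_congr rfl fun i _ => ?_
            rw [smul_smul, mul_comm]
          · rw [← Finset.sum_smul]
            congr 1
            rw [← Finset.sum_mul, mul_comm, htr1 n]
  rw [show (∑ n : Fin d × Fin d, ∑ i : Fin d',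
        (((lam n i : ℝ) : ℂ) * (eff n.1 n.2 * ρ).trace) • (sig n i - π))
      = ∑ n : Fin d × Fin d, ((effL d ρ n) • B' n - (effL d ρ n * (B' n).trace) • π) from
    Finset.sum_congr rfl fun n _ => hinner n]
  rw [Finset.sum_sub_distrib, ← hdecomp' ρ, ← Finset.sum_smul, htrB ρ, zero_smul, sub_zero, hΨ]
  abel

end ParityErasurePaper
end

section
/- Let A_1,…,A_N be finite sets. For a permutation π of {1,…,N}, say that a conditional probability distribution p((a_i)_{i=1}^N | (x_i)_{i=1}^N) with a_i ∈ A_i and x_i ∈ {0,1} is compatible with the causal order π if p(a|x) = ∏_{k=1}^N q_k( a_{π(k)} | (a_{π(l)})_{l<k}, (x_{π(l)})_{l<k} ) for some conditional probability distributions q_k. Suppose p is a convex combination p = Σ_π λ_π p_π with λ_π ≥ 0, Σ_π λ_π = 1, and each p_π compatible with the causal order π. Then for every nonempty subset I ⊆ {1,…,N} and every tuple (a_i)_{i∈I}: Σ_{x∈{0,1}^N} ( ∏_{i∈I} (−1)^{x_i} ) Σ_{(a_j)_{j∉I}} p(a|x) = 0; that is, the joint outcome (a_i)_{i∈I} is independent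 of the parity ⊕_{i∈I} x_i. -/
open scoped BigOperators

namespace ParityErasurePaper

/-- A conditional probability distribution `p(a|x)` (with `a_i ∈ A_i`, `x_i ∈ {0,1}`) is
compatible with the causal order given by the permutation `π` if it factorizes as
`p(a|x) = ∏_k q_k(a_{π(k)} | (a_{π(l)})_{l<k}, (x_{π(l)})_{l<k})` for conditional
probability distributions `q_k`. -/
def CompatibleOrder {N : ℕ} (A : Fin N → Type) [∀ i, Fintype (A i)]
    (π : Equiv.Perm (Fin N))
    (p : ((i : Fin N) → A i) → (Fin N → Fin 2) → ℝ) : Prop :=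
  ∃ q : (k : Fin N) → ((l : {l : Fin N // l < k}) → A (π l.1)) →
        ({l : Fin N // l < k} → Fin 2) → A (π k) → ℝ,
    (∀ k pa px a, 0 ≤ q k pa px a) ∧
    (∀ k pa px, (∑ a, q k pa px a) = 1) ∧
    (∀ a x, p a x = ∏ k, q k (fun l => a (π l.1)) (fun l => x (π l.1)) (a (π k)))

/-- Telescoping: the full sum over a product of normalized conditionals is 1. -/
lemma tele (n : ℕ) : ∀ (ι : Type) [Fintype ι] [LinearOrder ι], Fintype.card ι ≤ n →
    ∀ (B : ι → Type) [∀ k, Fintype (B k)]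
      (f : (k : ι) → ((l : {l : ι // l < k}) → B l.1) → B k → ℝ),
      (∀ k pb, (∑ b, f k pb b) = 1) →
      (∑ b : (k : ι) → B k, ∏ k, f k (fun l => b l.1) (b k)) = 1 := by
  induction n with
  | zero =>
    intro ι _ _ hcard B _ f hf
    have : IsEmpty ι := Fintype.card_eq_zero_iff.mp (Nat.le_zero.mp hcard)
    simp
  | succ n ih =>
    intro ι _ _ hcard B _ f hf
    by_cases hne : Nonempty ι
    · classical
      have hu : (Finset.univ : Finset ι).Nonempty := Finset.univ_nonempty
      set M : ι := Finset.univ.max' hu with hM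
      have hMmax : ∀ k : ι, k ≤ M := fun k => Finset.le_max' _ k (Finset.mem_univ k)
      rw [← Equiv.sum_comp (Equiv.piSplitAt M B).symm]
      rw [Fintype.sum_prod_type]
      have hlt : ∀ k : {j : ι // j ≠ M}, k.1 < M := fun k => lt_of_le_of_ne (hMmax k.1) k.2
      have hcard' : Fintype.card {j : ι // j ≠ M} ≤ n := by
        have h2 : Fintype.card {j : ι // j ≠ M} < Fintype.card ι :=
          Fintype.card_subtype_lt (x := M) (by simp)
        omega
      set f' : (k : {j : ι // j ≠ M}) → ((l : {l : {j : ι // j ≠ M} // l < k}) → B l.1.1) →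
          B k.1 → ℝ := fun k pb bk =>
        f k.1 (fun l => pb ⟨⟨l.1, ne_of_lt (lt_of_lt_of_le l.2 (le_of_lt (hlt k)))⟩,
          Subtype.mk_lt_mk.mpr l.2⟩) bk with hf'def
      have hf' : ∀ k pb, (∑ b, f' k pb b) = 1 := fun k pb => hf _ _
      have key := ih {j : ι // j ≠ M} hcard' (fun k => B k.1) f' hf'
      calc ∑ bM : B M, ∑ b' : (k : {j : ι // j ≠ M}) → B k.1,
            ∏ k, f k (fun l => (Equiv.piSplitAt M B).symm (bM, b') l.1)
              ((Equiv.piSplitAt M B).symm (bM, b') k)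
          = ∑ bM : B M, ∑ b' : (k : {j : ι // j ≠ M}) → B k.1,
            (f M (fun l => b' ⟨l.1, ne_of_lt l.2⟩) bM) *
            ∏ k : {j : ι // j ≠ M}, f' k (fun l => b' l.1) (b' k) := by
            apply Finset.sum_congr rfl; intro bM _
            apply Finset.sum_congr rfl; intro b' _
            have hb : ∀ (k : ι) (h : k ≠ M), (Equiv.piSplitAt M B).symm (bM, b') k = b' ⟨k, h⟩ := by
              intro k h; simp [Equiv.piSplitAt_symm_apply, h]
            have hbM : (Equiv.piSplitAt M B).symm (bM, b') M = bM := by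
              simp [Equiv.piSplitAt_symm_apply]
            rw [Fintype.prod_eq_mul_prod_compl M]
            congr 1
            · rw [show (fun l : {l : ι // l < M} => (Equiv.piSplitAt M B).symm (bM, b') l.1)
                  = (fun l : {l : ι // l < M} => b' ⟨l.1, ne_of_lt l.2⟩) from
                  funext fun l => hb l.1 (ne_of_lt l.2), hbM]
            · rw [Finset.prod_subtype (p := fun j => j ≠ M) ({M}ᶜ : Finset ι) (by simp) (fun k =>
                f k (fun l => (Equiv.piSplitAt M B).symm (bM, b') l.1)
                  ((Equiv.piSplitAt M B).symm (bM, b') k))]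
              apply Finset.prod_congr rfl
              intro k _
              rw [hf'def]
              have h1 : (fun l : {l : ι // l < k.1} =>
                    (Equiv.piSplitAt M B).symm (bM, b') l.1)
                  = (fun l : {l : ι // l < k.1} => b' ⟨l.1,
                      ne_of_lt (lt_of_lt_of_le l.2 (le_of_lt (hlt k)))⟩) :=
                funext fun l => hb l.1 _
              rw [h1, hb k.1 k.2]
        _ = 1 := by
            rw [Finset.sum_comm]
            have hs : ∀ b' : (k : {j : ι // j ≠ M}) → B k.1,
                (∑ bM : B M, (f M (fun l => b' ⟨l.1, ne_of_lt l.2⟩) bM) *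
                  ∏ k : {j : ι // j ≠ M}, f' k (fun l => b' l.1) (b' k))
                = ∏ k : {j : ι // j ≠ M}, f' k (fun l => b' l.1) (b' k) := by
              intro b'; rw [← Finset.sum_mul, hf, one_mul]
            simp only [hs]
            exact key
    · have : IsEmpty ι := not_nonempty_iff.mp hne
      simp


set_option maxHeartbeats 1000000 in
lemma single {N : ℕ} (B : Fin N → Type) [∀ k, Fintype (B k)]
    (q : (k : Fin N) → ((l : {l : Fin N // l < k}) → B l.1) →
        ({l : Fin N // l < k} → Fin 2) → B k → ℝ)
    (hq : ∀ k pb px, (∑ b, q k pb px b) = 1)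
    (K : Finset (Fin N)) (hK : K.Nonempty)
    (β : (k : {m // m ∈ K}) → B k.1)
    [inddec : ∀ b : (k : Fin N) → B k, Decidable (∀ k (h : k ∈ K), b k = β ⟨k, h⟩)] :
    ∑ y : Fin N → Fin 2, (∏ k ∈ K, (-1:ℝ)^((y k : ℕ))) *
      ∑ b : (k : Fin N) → B k,
        (if ∀ k (h : k ∈ K), b k = β ⟨k, h⟩ then (1:ℝ) else 0) *
        ∏ k, q k (fun l => b l.1) (fun l => y l.1) (b k) = 0 := by
  classical
  set t : Fin N := K.max' hK with htdef
  have ht : t ∈ K := K.max'_mem hK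
  have htmax : ∀ k ∈ K, k ≤ t := fun k hk => K.le_max' k hk
  set H : (Fin N → Fin 2) → ℝ := fun y =>
    ∑ b : (k : Fin N) → B k,
      (if ∀ k (h : k ∈ K), b k = β ⟨k, h⟩ then (1:ℝ) else 0) *
      ∏ k, q k (fun l => b l.1) (fun l => y l.1) (b k) with hHdef
  set G : ({l : Fin N // l < t} → Fin 2) → ℝ := fun z =>
    ∑ bh : (k : {k : Fin N // k ≤ t}) → B k.1,
      (if ∀ k (h : k ∈ K), bh ⟨k, htmax k h⟩ = β ⟨k, h⟩ then (1:ℝ) else 0) *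
      ∏ k : {k : Fin N // k ≤ t}, q k.1
        (fun l => bh ⟨l.1, le_trans (le_of_lt l.2) k.2⟩)
        (fun l => z ⟨l.1, lt_of_lt_of_le l.2 k.2⟩) (bh k) with hGdef
  have hHG : ∀ y, H y = G (fun l => y l.1) := by
    intro y
    simp only [hHdef, hGdef]
    rw [← Equiv.sum_comp (Equiv.piEquivPiSubtypeProd (fun k => k ≤ t) B).symm]
    rw [Fintype.sum_prod_type]
    apply Finset.sum_congr rfl
    intro bh _
    have hb : ∀ bt (k : Fin N),
        (Equiv.piEquivPiSubtypeProd (fun k => k ≤ t) B).symm (bh, bt) k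
        = if h : k ≤ t then bh ⟨k, h⟩ else bt ⟨k, h⟩ := by
      intro bt k; rfl
    have hind : ∀ bt,
        (if ∀ k (h : k ∈ K), (Equiv.piEquivPiSubtypeProd (fun k => k ≤ t) B).symm (bh, bt) k
            = β ⟨k, h⟩ then (1:ℝ) else 0)
        = (if ∀ k (h : k ∈ K), bh ⟨k, htmax k h⟩ = β ⟨k, h⟩ then (1:ℝ) else 0) := by
      intro bt
      apply if_congr _ rfl rfl
      constructor
      · intro h k hk
        have := h k hk
        rw [hb bt k, dif_pos (htmax k hk)] at this
        exact this
      · intro h k hk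
        rw [hb bt k, dif_pos (htmax k hk)]
        exact h k hk
    have hsplit : ∀ bt, (∏ k, q k
          (fun l => (Equiv.piEquivPiSubtypeProd (fun k => k ≤ t) B).symm (bh, bt) l.1)
          (fun l => y l.1)
          ((Equiv.piEquivPiSubtypeProd (fun k => k ≤ t) B).symm (bh, bt) k))
        = (∏ k : {k : Fin N // k ≤ t}, q k.1
            (fun l => bh ⟨l.1, le_trans (le_of_lt l.2) k.2⟩)
            (fun l => y l.1) (bh k)) *
          (∏ k : {k : Fin N // ¬ k ≤ t}, q k.1
            (fun l => if h : l.1 ≤ t then bh ⟨l.1, h⟩ else bt ⟨l.1, h⟩)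
            (fun l => y l.1) (bt k)) := by
      intro bt
      rw [← Fintype.prod_subtype_mul_prod_subtype (fun k => k ≤ t)]
      congr 1
      · apply Finset.prod_congr rfl
        intro k _
        have h1 : (fun l : {l : Fin N // l < k.1} =>
              (Equiv.piEquivPiSubtypeProd (fun k => k ≤ t) B).symm (bh, bt) l.1)
            = (fun l : {l : Fin N // l < k.1} => bh ⟨l.1, le_trans (le_of_lt l.2) k.2⟩) := by
          funext l; rw [hb bt l.1, dif_pos (le_trans (le_of_lt l.2) k.2)]
        rw [h1]
        have h2 : (Equiv.piEquivPiSubtypeProd (fun k => k ≤ t) B).symm (bh, bt) k.1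
            = bh k := by rw [hb bt k.1]; exact dif_pos k.2
        rw [h2]
      · apply Finset.prod_congr rfl
        intro k _
        have h1 : (fun l : {l : Fin N // l < k.1} =>
              (Equiv.piEquivPiSubtypeProd (fun k => k ≤ t) B).symm (bh, bt) l.1)
            = (fun l : {l : Fin N // l < k.1} =>
                if h : l.1 ≤ t then bh ⟨l.1, h⟩ else bt ⟨l.1, h⟩) := by
          funext l; rw [hb bt l.1]
        rw [h1]
        have h2 : (Equiv.piEquivPiSubtypeProd (fun k => k ≤ t) B).symm (bh, bt) k.1
            = bt k := by rw [hb bt k.1]; exact dif_neg k.2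
        rw [h2]
    simp only [hind, hsplit, ← mul_assoc]
    rw [← Finset.mul_sum]
    have htail : (∑ bt : (k : {k : Fin N // ¬ k ≤ t}) → B k.1,
        ∏ k : {k : Fin N // ¬ k ≤ t}, q k.1
          (fun l => if h : l.1 ≤ t then bh ⟨l.1, h⟩ else bt ⟨l.1, h⟩)
          (fun l => y l.1) (bt k)) = 1 := by
      have := tele (Fintype.card {k : Fin N // ¬ k ≤ t}) {k : Fin N // ¬ k ≤ t} le_rfl
        (fun k => B k.1)
        (fun k pb bk => q k.1
          (fun l => if h : l.1 ≤ t then bh ⟨l.1, h⟩ else pb ⟨⟨l.1, h⟩, Subtype.mk_lt_mk.mpr l.2⟩)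
          (fun l => y l.1) bk)
        (fun k pb => hq _ _ _)
      convert this using 2
      exact congrArg (fun i => @Finset.univ _ i) (Subsingleton.elim _ _)
    rw [htail, mul_one]
  -- now the parity-flip argument
  have hflipinv : Function.Involutive
      (fun y : Fin N → Fin 2 => Function.update y t (y t + 1)) := by
    intro y
    funext k
    by_cases hk : k = t
    · subst hk
      simp only [Function.update_self]
      have : ∀ b : Fin 2, b + 1 + 1 = b := by decide
      exact this (y t)
    · simp only [Function.update_of_ne hk]
  set σ : Equiv.Perm (Fin N → Fin 2) := hflipinv.toPerm _ with hσdef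
  set g : (Fin N → Fin 2) → ℝ := fun y => (∏ k ∈ K, (-1:ℝ)^((y k : ℕ))) * H y with hgdef
  have hneg : ∀ y, g (σ y) = - g y := by
    intro y
    have hσy : σ y = Function.update y t (y t + 1) := rfl
    have hGpart : H (σ y) = H y := by
      rw [hHG, hHG]
      have hfun : (fun l : {l : Fin N // l < t} => σ y l.1) = (fun l => y l.1) := by
        funext l
        rw [hσy]
        exact Function.update_of_ne (ne_of_lt l.2) _ _
      exact congrArg G hfun
    have hsign : (∏ k ∈ K, (-1:ℝ)^(((σ y) k : ℕ))) = - ∏ k ∈ K, (-1:ℝ)^((y k : ℕ)) := by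
      rw [← Finset.mul_prod_erase K _ ht, ← Finset.mul_prod_erase K (fun k => (-1:ℝ)^((y k : ℕ))) ht]
      have herase : ∏ k ∈ K.erase t, (-1:ℝ)^(((σ y) k : ℕ))
          = ∏ k ∈ K.erase t, (-1:ℝ)^((y k : ℕ)) := by
        apply Finset.prod_congr rfl
        intro k hk
        rw [hσy, Function.update_of_ne (Finset.ne_of_mem_erase hk)]
      rw [herase]
      have hflip : ((-1:ℝ))^((((σ y) t) : ℕ)) = -((-1:ℝ))^((y t : ℕ)) := by
        rw [hσy, Function.update_self]
        have : ∀ b : Fin 2, ((-1:ℝ))^(((b + 1 : Fin 2) : ℕ)) = -((-1:ℝ))^((b : ℕ)) := by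
          intro b
          fin_cases b
          · norm_num [show (((0:Fin 2) + 1 : Fin 2) : ℕ) = 1 from rfl]
          · norm_num [show (((2:Fin 2)) : ℕ) = 0 from rfl,
              show (((1:Fin 2)) : ℕ) = 1 from rfl,
              show (((1:Fin 2) + 1 : Fin 2) : ℕ) = 0 from rfl]
        exact this (y t)
      rw [hflip]
      ring
    rw [hgdef]
    simp only
    rw [hGpart, hsign]
    ring
  have hsum : (∑ y : Fin N → Fin 2, g y) = - ∑ y : Fin N → Fin 2, g y := by
    conv_lhs => rw [← Equiv.sum_comp σ g]
    rw [show (∑ y, g (σ y)) = ∑ y, - g y from Finset.sum_congr rfl fun y _ => hneg y]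
    rw [Finset.sum_neg_distrib]
  have : (∑ y : Fin N → Fin 2, g y) = 0 := by linarith
  exact this


lemma mergesum {N : ℕ} (A : Fin N → Type) [∀ i, Fintype (A i)] (I : Finset (Fin N))
    (aI : (i : {m // m ∈ I}) → A i.1) (F : ((i : Fin N) → A i) → ℝ)
    [∀ a : (i : Fin N) → A i, Decidable (∀ i (h : i ∈ I), a i = aI ⟨i, h⟩)] :
    (∑ c : (j : {m // m ∉ I}) → A j.1, F (fun i => if h : i ∈ I then aI ⟨i, h⟩ else c ⟨i, h⟩))
    = ∑ a : (i : Fin N) → A i,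
        (if ∀ i (h : i ∈ I), a i = aI ⟨i, h⟩ then (1:ℝ) else 0) * F a := by
  classical
  have h1 : ∀ a : (i : Fin N) → A i,
      (if ∀ i (h : i ∈ I), a i = aI ⟨i, h⟩ then (1:ℝ) else 0) * F a
      = (if ∀ i (h : i ∈ I), a i = aI ⟨i, h⟩ then F a else 0) := by
    intro a; by_cases h : ∀ i (h : i ∈ I), a i = aI ⟨i, h⟩ <;> simp [h]
  simp only [h1]
  rw [← Finset.sum_filter]
  apply Finset.sum_nbij' (i := fun c => fun i => if h : i ∈ I then aI ⟨i, h⟩ else c ⟨i, h⟩)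
    (j := fun a => fun j : {m // m ∉ I} => a j.1)
  · intro c _
    simp only [Finset.mem_filter, Finset.mem_univ, true_and]
    intro i hi
    exact dif_pos hi
  · intro a _
    exact Finset.mem_univ _
  · intro c _
    funext j
    exact dif_neg j.2
  · intro a ha
    simp only [Finset.mem_filter, Finset.mem_univ, true_and] at ha
    funext i
    by_cases hi : i ∈ I
    · rw [dif_pos hi]; exact (ha i hi).symm
    · rw [dif_neg hi]
  · intro c _
    rfl


set_option maxHeartbeats 1000000 in
lemma keyPerm {N : ℕ} (A : Fin N → Type) [∀ i, Fintype (A i)] (π : Equiv.Perm (Fin N))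
    (P : ((i : Fin N) → A i) → (Fin N → Fin 2) → ℝ) (hco : CompatibleOrder A π P)
    (I : Finset (Fin N)) (hI : I.Nonempty) (aI : (i : {m // m ∈ I}) → A i.1) :
    ∑ x : Fin N → Fin 2, (∏ i ∈ I, (-1:ℝ)^((x i : ℕ))) *
      ∑ c : (j : {m // m ∉ I}) → A j.1,
        P (fun i => if h : i ∈ I then aI ⟨i, h⟩ else c ⟨i, h⟩) x = 0 := by
  classical
  obtain ⟨q, hq0, hq1, hfac⟩ := hco
  simp only [hfac]
  set K : Finset (Fin N) := I.preimage π (π.injective.injOn) with hKdef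
  have hKmem : ∀ k, k ∈ K ↔ π k ∈ I := fun k => Finset.mem_preimage
  obtain ⟨i0, hi0⟩ := hI
  have hKne : K.Nonempty :=
    ⟨π.symm i0, (hKmem _).mpr (by rw [Equiv.apply_symm_apply]; exact hi0)⟩
  set β : (k : {m // m ∈ K}) → A (π k.1) := fun k => aI ⟨π k.1, (hKmem k.1).mp k.2⟩ with hβdef
  -- step B1 : replace the sum over c by a sum over all a with an indicator
  have hB1 : ∀ x : Fin N → Fin 2,
      (∑ c : (j : {m // m ∉ I}) → A j.1,
        ∏ k, q k (fun l => (fun i => if h : i ∈ I then aI ⟨i, h⟩ else c ⟨i, h⟩) (π l.1))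
          (fun l => x (π l.1)) ((fun i => if h : i ∈ I then aI ⟨i, h⟩ else c ⟨i, h⟩) (π k)))
      = ∑ a : (i : Fin N) → A i,
          (if ∀ i (h : i ∈ I), a i = aI ⟨i, h⟩ then (1:ℝ) else 0) *
          ∏ k, q k (fun l => a (π l.1)) (fun l => x (π l.1)) (a (π k)) := fun x =>
    mergesum A I aI (fun a => ∏ k, q k (fun l => a (π l.1)) (fun l => x (π l.1)) (a (π k)))
  simp only [hB1]
  -- step B2 : reindex the sum over a by the permutation
  have hB2 : ∀ x : Fin N → Fin 2,
      (∑ a : (i : Fin N) → A i,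
          (if ∀ i (h : i ∈ I), a i = aI ⟨i, h⟩ then (1:ℝ) else 0) *
          ∏ k, q k (fun l => a (π l.1)) (fun l => x (π l.1)) (a (π k)))
      = ∑ b : (k : Fin N) → A (π k),
          (if ∀ k (h : k ∈ K), b k = β ⟨k, h⟩ then (1:ℝ) else 0) *
          ∏ k, q k (fun l => b l.1) (fun l => x (π l.1)) (b k) := by
    intro x
    rw [← Equiv.sum_comp (Equiv.piCongrLeft A π)]
    apply Finset.sum_congr rfl
    intro b _
    congr 1
    · apply if_congr _ rfl rfl
      constructor
      · intro h k hk
        have h2 := h (π k) ((hKmem k).mp hk)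
        rw [Equiv.piCongrLeft_apply_apply] at h2
        exact h2
      · intro h i hi
        obtain ⟨k, rfl⟩ : ∃ k, π k = i := ⟨π.symm i, π.apply_symm_apply i⟩
        rw [Equiv.piCongrLeft_apply_apply]
        exact h k ((hKmem k).mpr hi)
    · apply Finset.prod_congr rfl
      intro k _
      rw [show (fun l : {l : Fin N // l < k} => (Equiv.piCongrLeft A π) b (π l.1))
          = (fun l : {l : Fin N // l < k} => b l.1) from
          funext fun l => Equiv.piCongrLeft_apply_apply A π b l.1,
        Equiv.piCongrLeft_apply_apply]
  simp only [hB2]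
  -- reindex the sum over x by the permutation
  rw [← Equiv.sum_comp (Equiv.piCongrLeft (fun _ : Fin N => Fin 2) π)]
  have hsign : ∀ y : Fin N → Fin 2,
      (∏ i ∈ I, (-1:ℝ)^(((Equiv.piCongrLeft (fun _ : Fin N => Fin 2) π) y i : ℕ)))
      = ∏ k ∈ K, (-1:ℝ)^((y k : ℕ)) := by
    intro y
    rw [← Finset.prod_preimage π I (π.injective.injOn)
      (fun i => (-1:ℝ)^(((Equiv.piCongrLeft (fun _ : Fin N => Fin 2) π) y i : ℕ)))
      (fun i _ hri => absurd (π.surjective i) (by simpa using hri))]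
    apply Finset.prod_congr rfl
    intro k _
    rw [Equiv.piCongrLeft_apply_apply]
  have hx : ∀ (y : Fin N → Fin 2) (k : Fin N),
      (fun l : {l : Fin N // l < k} =>
        (Equiv.piCongrLeft (fun _ : Fin N => Fin 2) π) y (π l.1))
      = (fun l : {l : Fin N // l < k} => y l.1) :=
    fun y k => funext fun l => Equiv.piCongrLeft_apply_apply (fun _ : Fin N => Fin 2) π y l.1
  simp only [hsign, hx]
  exact single (fun k => A (π k)) q hq1 K hKne β


/-- if `p` is a convex combination `Σ_π λ_π p_π` of conditional probability
distributions each compatible with a fixed causal order `π`, then for every nonempty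
`I ⊆ {1,…,N}` and every outcome tuple `(a_i)_{i∈I}`, the joint outcome `(a_i)_{i∈I}` is
independent of the parity `⊕_{i∈I} x_i`:
`Σ_x (∏_{i∈I} (−1)^{x_i}) Σ_{(a_j)_{j∉I}} p(a|x) = 0`. -/
theorem statement_6 {N : ℕ} (A : Fin N → Type) [∀ i, Fintype (A i)]
    (p : ((i : Fin N) → A i) → (Fin N → Fin 2) → ℝ)
    (lam : Equiv.Perm (Fin N) → ℝ)
    (pp : Equiv.Perm (Fin N) → ((i : Fin N) → A i) → (Fin N → Fin 2) → ℝ)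
    (hlam : ∀ π, 0 ≤ lam π)
    (hlam1 : (∑ π : Equiv.Perm (Fin N), lam π) = 1)
    (hdist : ∀ π, (∀ a x, 0 ≤ pp π a x) ∧ ∀ x, (∑ a, pp π a x) = 1)
    (hcomp : ∀ π : Equiv.Perm (Fin N), CompatibleOrder A π (pp π))
    (hmix : ∀ a x, p a x = ∑ π : Equiv.Perm (Fin N), lam π * pp π a x) :
    ∀ I : Finset (Fin N), I.Nonempty →
    ∀ aI : (i : {m // m ∈ I}) → A i.1,
      ∑ x : Fin N → Fin 2,
        (∏ i ∈ I, (-1 : ℝ) ^ ((x i : ℕ))) *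
        ∑ c : (j : {m // m ∉ I}) → A j.1,
          p (fun i => if h : i ∈ I then aI ⟨i, h⟩ else c ⟨i, h⟩) x = 0 := by
  intro I hI aI
  classical
  simp only [hmix]
  have h1 : ∀ x : Fin N → Fin 2,
      (∑ c : (j : {m // m ∉ I}) → A j.1, ∑ π : Equiv.Perm (Fin N),
        lam π * pp π (fun i => if h : i ∈ I then aI ⟨i, h⟩ else c ⟨i, h⟩) x)
      = ∑ π : Equiv.Perm (Fin N),
          lam π * ∑ c : (j : {m // m ∉ I}) → A j.1,
            pp π (fun i => if h : i ∈ I then aI ⟨i, h⟩ else c ⟨i, h⟩) x := by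
    intro x
    rw [Finset.sum_comm]
    exact Finset.sum_congr rfl fun π _ => (Finset.mul_sum _ _ _).symm
  simp only [h1]
  have h2 : ∀ x : Fin N → Fin 2,
      (∏ i ∈ I, (-1 : ℝ) ^ ((x i : ℕ))) *
        (∑ π : Equiv.Perm (Fin N), lam π * ∑ c : (j : {m // m ∉ I}) → A j.1,
          pp π (fun i => if h : i ∈ I then aI ⟨i, h⟩ else c ⟨i, h⟩) x)
      = ∑ π : Equiv.Perm (Fin N), lam π * ((∏ i ∈ I, (-1 : ℝ) ^ ((x i : ℕ))) *
          ∑ c : (j : {m // m ∉ I}) → A j.1,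
            pp π (fun i => if h : i ∈ I then aI ⟨i, h⟩ else c ⟨i, h⟩) x) := by
    intro x
    rw [Finset.mul_sum]
    exact Finset.sum_congr rfl fun π _ => by ring
  simp only [h2]
  rw [Finset.sum_comm]
  apply Finset.sum_eq_zero
  intro π _
  rw [← Finset.mul_sum, keyPerm A π (pp π) (hcomp π) I hI aI, mul_zero]

end ParityErasurePaper
end

section
/- Let X_1,…,X_N and A_1,…,A_N be finite-dimensional complex Hilbert spaces and let S be an operator on X_1⊗⋯⊗X_N⊗A_1⊗⋯⊗A_N satisfying Tr S = ∏_{i=1}^N dim X_i and the process conditions (3) for every nonempty subset I ⊆ {1,…,N}. Then Tr_{A_1⊗⋯⊗A_N} S = I_{X_1⊗⋯⊗X_N}; that is, S is the Choi matrix of a trace-preserving map sending the joint output systems of the local parties to their joint input systems. -/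
open scoped BigOperators ComplexOrder

namespace ParityErasurePaper

variable {N : ℕ}

section Aux

variable {N : ℕ}

/-- key counting lemma -/
lemma sum_update {d : Fin N → ℕ} (j : Fin N) (g : PiIx d → ℂ) :
    ∑ c : PiIx d, ∑ z : Fin (d j), g (Function.update c j z) = (d j : ℂ) * ∑ c, g c := by
  have hinv : Function.Involutive
      (fun x : PiIx d × Fin (d j) => (Function.update x.1 j x.2, x.1 j)) := by
    intro x
    simp [Function.update_idem, Function.update_eq_self]
  rw [← Fintype.sum_prod_type']
  rw [Fintype.sum_equiv hinv.toPerm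
    (fun x => g (Function.update x.1 j x.2)) (fun x => g x.1) (fun x => rfl)]
  rw [Fintype.sum_prod_type]
  simp only [Finset.sum_const, Finset.card_univ, Fintype.card_fin, nsmul_eq_mul]
  rw [← Finset.mul_sum]


/-- The depolarizing map on factor `i`, as a linear map on matrices over `PiIx dX`. -/
noncomputable def Q (dX : Fin N → ℕ) (i : Fin N) :
    Matrix (PiIx dX) (PiIx dX) ℂ →ₗ[ℂ] Matrix (PiIx dX) (PiIx dX) ℂ where
  toFun T := Matrix.of fun p q =>
    (if p i = q i then ((dX i : ℂ))⁻¹ else 0) *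
      ∑ z : Fin (dX i), T (Function.update p i z) (Function.update q i z)
  map_add' T T' := by
    ext p q
    simp [Matrix.add_apply, Finset.sum_add_distrib, mul_add]
  map_smul' c T := by
    ext p q
    simp only [Matrix.smul_apply, Matrix.of_apply, smul_eq_mul, Finset.mul_sum, RingHom.id_apply]
    split_ifs with h
    · exact Finset.sum_congr rfl fun z _ => by ring
    · simp

lemma Q_apply (dX : Fin N → ℕ) (i : Fin N) (T : Matrix (PiIx dX) (PiIx dX) ℂ) (p q) :
    Q dX i T p q = (if p i = q i then ((dX i : ℂ))⁻¹ else 0) *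
      ∑ z : Fin (dX i), T (Function.update p i z) (Function.update q i z) := rfl

lemma Q_comm (dX : Fin N → ℕ) (i j : Fin N) (T : Matrix (PiIx dX) (PiIx dX) ℂ) :
    Q dX i (Q dX j T) = Q dX j (Q dX i T) := by
  rcases eq_or_ne i j with rfl | h
  · rfl
  ext p q
  simp only [Q_apply, Function.update_of_ne h, Function.update_of_ne h.symm,
    Finset.mul_sum]
  rw [Finset.sum_comm]
  apply Finset.sum_congr rfl
  intro z _
  apply Finset.sum_congr rfl
  intro w _
  rw [Function.update_comm h, Function.update_comm h]
  ring

lemma Q_idem (dX : Fin N → ℕ) (i : Fin N) (hd : dX i ≠ 0)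
    (T : Matrix (PiIx dX) (PiIx dX) ℂ) :
    Q dX i (Q dX i T) = Q dX i T := by
  ext p q
  simp only [Q_apply, Function.update_self, Function.update_idem, if_true]
  rw [Finset.sum_const, Finset.card_univ, Fintype.card_fin, nsmul_eq_mul]
  rcases eq_or_ne (p i) (q i) with hpq | hpq
  · have hdc : (dX i : ℂ) ≠ 0 := Nat.cast_ne_zero.2 hd
    simp only [hpq, if_pos rfl, if_true]
    rw [mul_inv_cancel_left₀ hdc]
  · simp [hpq]


/-- apply `Q` over a list of indices. -/
noncomputable def appQ (dX : Fin N → ℕ) (l : List (Fin N))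
    (T : Matrix (PiIx dX) (PiIx dX) ℂ) : Matrix (PiIx dX) (PiIx dX) ℂ :=
  l.foldr (fun i T' => Q dX i T') T

/-- apply `id - Q` over a list of indices. -/
noncomputable def appD (dX : Fin N → ℕ) (l : List (Fin N))
    (T : Matrix (PiIx dX) (PiIx dX) ℂ) : Matrix (PiIx dX) (PiIx dX) ℂ :=
  l.foldr (fun i T' => T' - Q dX i T') T

@[simp] lemma appQ_nil (dX : Fin N → ℕ) (T) : appQ dX [] T = T := rfl
@[simp] lemma appQ_cons (dX : Fin N → ℕ) (i l T) :
    appQ dX (i :: l) T = Q dX i (appQ dX l T) := rfl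
@[simp] lemma appD_nil (dX : Fin N → ℕ) (T) : appD dX [] T = T := rfl
@[simp] lemma appD_cons (dX : Fin N → ℕ) (i l T) :
    appD dX (i :: l) T = appD dX l T - Q dX i (appD dX l T) := rfl

lemma foldr_comp {α β : Type*} (F : α → β → β) (l : List α) (x : β) :
    ((l.map F).foldr (· ∘ ·) id) x = l.foldr F x := by
  induction l with
  | nil => rfl
  | cons a t ih => simp [ih, Function.comp]

lemma appQ_perm (dX : Fin N → ℕ) {l l' : List (Fin N)} (h : l.Perm l') (T) :
    appQ dX l T = appQ dX l' T := by
  letI : LeftCommutative fun (i : Fin N) (T' : Matrix (PiIx dX) (PiIx dX) ℂ) => Q dX i T' :=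
    ⟨fun a b c => Q_comm dX a b c⟩
  exact h.foldr_eq T

lemma appQ_append (dX : Fin N → ℕ) (l₁ l₂ : List (Fin N)) (T) :
    appQ dX (l₁ ++ l₂) T = appQ dX l₁ (appQ dX l₂ T) := by
  simp [appQ, List.foldr_append]

lemma appQ_union (dX : Fin N → ℕ) (K L : Finset (Fin N)) (hKL : Disjoint K L) (T) :
    appQ dX (K ∪ L).toList T = appQ dX K.toList (appQ dX L.toList T) := by
  rw [← appQ_append]
  apply appQ_perm
  apply List.perm_of_nodup_nodup_toFinset_eq (K ∪ L).nodup_toList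
  · exact List.Nodup.append K.nodup_toList L.nodup_toList
      (fun a ha hb => Finset.disjoint_left.1 hKL (by simpa using ha) (by simpa using hb))
  · simp

lemma appQ_insert (dX : Fin N → ℕ) (i : Fin N) (K : Finset (Fin N)) (hi : i ∉ K) (T) :
    appQ dX (insert i K).toList T = Q dX i (appQ dX K.toList T) := by
  have : appQ dX (insert i K).toList T = appQ dX (i :: K.toList) T := by
    apply appQ_perm
    apply List.perm_of_nodup_nodup_toFinset_eq (insert i K).nodup_toList
    · exact List.nodup_cons.2 ⟨by simpa using hi, K.nodup_toList⟩
    · simp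
  rw [this, appQ_cons]

lemma appD_expand (dX : Fin N → ℕ) (l : List (Fin N)) (hl : l.Nodup) (T) :
    appD dX l T =
      ∑ K ∈ l.toFinset.powerset, ((-1 : ℂ)) ^ K.card • appQ dX K.toList T := by
  induction l with
  | nil => simp
  | cons i t ih =>
    obtain ⟨hi, ht⟩ := List.nodup_cons.1 hl
    have hi' : i ∉ t.toFinset := by simpa using hi
    rw [appD_cons, ih ht, map_sum, List.toFinset_cons, Finset.sum_powerset_insert hi']
    have h2 : ∀ K ∈ t.toFinset.powerset,
        (-1 : ℂ) ^ (insert i K).card • appQ dX (insert i K).toList T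
          = -((-1 : ℂ) ^ K.card • Q dX i (appQ dX K.toList T)) := by
      intro K hK
      have hiK : i ∉ K := fun h => hi' (Finset.mem_powerset.1 hK h)
      rw [appQ_insert dX i K hiK, Finset.card_insert_of_notMem hiK, pow_succ]
      rw [mul_neg_one, neg_smul]
    rw [Finset.sum_congr rfl h2]
    simp only [map_smul]
    rw [Finset.sum_neg_distrib, sub_eq_add_neg]


/-- substitute `c` on the coordinates in `J`. -/
def mrg (dX : Fin N → ℕ) (J : Finset (Fin N)) (p c : PiIx dX) : PiIx dX :=
  fun i => if i ∈ J then c i else p i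

lemma mrg_empty (dX : Fin N → ℕ) (p c : PiIx dX) : mrg dX ∅ p c = p := by
  funext k; simp [mrg]

lemma mrg_univ (dX : Fin N → ℕ) (p c : PiIx dX) : mrg dX Finset.univ p c = c := by
  funext k; simp [mrg]

lemma mrg_update (dX : Fin N → ℕ) (J : Finset (Fin N)) (i : Fin N) (hi : i ∉ J)
    (p c : PiIx dX) (z : Fin (dX i)) :
    mrg dX J (Function.update p i z) c = Function.update (mrg dX J p c) i z := by
  funext k
  rcases eq_or_ne k i with rfl | hk
  · simp [mrg, hi, Function.update_self]
  · simp [mrg, Function.update_of_ne hk]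

lemma mrg_insert (dX : Fin N → ℕ) (J : Finset (Fin N)) (i : Fin N)
    (p c : PiIx dX) :
    mrg dX (insert i J) p c = Function.update (mrg dX J p c) i (c i) := by
  funext k
  rcases eq_or_ne k i with rfl | hk
  · simp [mrg, Function.update_self]
  · simp only [mrg, Function.update_of_ne hk, Finset.mem_insert]
    split_ifs with h1 h2 h3 <;> first | rfl | tauto

lemma mrg_of_notmem (dX : Fin N → ℕ) (J : Finset (Fin N)) (i : Fin N) (hi : i ∉ J)
    (p c : PiIx dX) (z : Fin (dX i)) :
    mrg dX J p (Function.update c i z) = mrg dX J p c := by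
  funext k
  rcases eq_or_ne k i with rfl | hk
  · simp [mrg, hi]
  · simp [mrg, Function.update_of_ne hk]

lemma appQ_closed (dX : Fin N → ℕ) (hd : ∀ i, dX i ≠ 0) (l : List (Fin N)) (hl : l.Nodup)
    (T : Matrix (PiIx dX) (PiIx dX) ℂ) (p q : PiIx dX) :
    appQ dX l T p q =
      (∏ i ∈ l.toFinset, (if p i = q i then ((dX i : ℂ))⁻¹ else 0)) *
        ((∏ i ∈ l.toFinsetᶜ, (dX i : ℂ))⁻¹ *
          ∑ c : PiIx dX, T (mrg dX l.toFinset p c) (mrg dX l.toFinset q c)) := by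
  induction l generalizing p q with
  | nil =>
    simp only [appQ_nil, List.toFinset_nil, Finset.prod_empty, one_mul, mrg_empty,
      Finset.compl_empty, Finset.sum_const, Finset.card_univ, nsmul_eq_mul]
    have hcard : (Fintype.card (PiIx dX) : ℂ) = ∏ i, (dX i : ℂ) := by
      rw [Fintype.card_pi]
      push_cast
      simp
    rw [hcard, inv_mul_cancel_left₀]
    exact Finset.prod_ne_zero_iff.2 fun i _ => Nat.cast_ne_zero.2 (hd i)
  | cons i t ih =>
    obtain ⟨hi, ht⟩ := List.nodup_cons.1 hl
    have hi' : i ∉ t.toFinset := by simpa using hi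
    rw [appQ_cons, Q_apply]
    have step : ∀ z : Fin (dX i),
        appQ dX t T (Function.update p i z) (Function.update q i z) =
        (∏ k ∈ t.toFinset, (if p k = q k then ((dX k : ℂ))⁻¹ else 0)) *
          ((∏ k ∈ t.toFinsetᶜ, (dX k : ℂ))⁻¹ *
            ∑ c : PiIx dX, T (Function.update (mrg dX t.toFinset p c) i z)
              (Function.update (mrg dX t.toFinset q c) i z)) := by
      intro z
      rw [ih ht]
      congr 1
      · refine Finset.prod_congr rfl fun k hk => ?_
        have hki : k ≠ i := fun h => hi' (h ▸ hk)
        rw [Function.update_of_ne hki, Function.update_of_ne hki]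
      · congr 1
        refine Finset.sum_congr rfl fun c _ => ?_
        rw [mrg_update dX _ i hi', mrg_update dX _ i hi']
    simp only [step]
    rw [← Finset.mul_sum, ← Finset.mul_sum]
    -- now: δ_i * (∑_z Pt * (Cinv * Sz)) with ∑_z ∑_c ... = dX i * ∑_c
    have key : ∑ z : Fin (dX i), ∑ c : PiIx dX,
        T (Function.update (mrg dX t.toFinset p c) i z)
          (Function.update (mrg dX t.toFinset q c) i z)
        = (dX i : ℂ) * ∑ c : PiIx dX,
            T (mrg dX (insert i t.toFinset) p c) (mrg dX (insert i t.toFinset) q c) := by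
      rw [Finset.sum_comm]
      have heq : ∑ c : PiIx dX, ∑ z : Fin (dX i),
          T (Function.update (mrg dX t.toFinset p c) i z)
            (Function.update (mrg dX t.toFinset q c) i z)
          = ∑ c : PiIx dX, ∑ z : Fin (dX i),
            (fun c' => T (mrg dX (insert i t.toFinset) p c')
              (mrg dX (insert i t.toFinset) q c')) (Function.update c i z) := by
        refine Finset.sum_congr rfl fun c _ => Finset.sum_congr rfl fun z _ => ?_
        simp only
        rw [mrg_insert, mrg_insert, mrg_of_notmem dX _ i hi', mrg_of_notmem dX _ i hi',
          Function.update_self]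
      rw [heq]
      exact sum_update (d := dX) i
        (fun c' => T (mrg dX (insert i t.toFinset) p c') (mrg dX (insert i t.toFinset) q c'))
    rw [key, List.toFinset_cons, Finset.prod_insert hi', Finset.compl_insert]
    have hic : i ∈ t.toFinsetᶜ := Finset.mem_compl.2 hi'
    rw [← Finset.mul_prod_erase _ _ hic]
    have hdc : (dX i : ℂ) ≠ 0 := Nat.cast_ne_zero.2 (hd i)
    have hcan : ∀ B W : ℂ, ((dX i : ℂ) * B)⁻¹ * ((dX i : ℂ) * W) = B⁻¹ * W := by
      intro B W
      rw [mul_inv, mul_comm ((dX i : ℂ))⁻¹, mul_assoc, inv_mul_cancel_left₀ hdc]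
    rw [hcan]
    ring


/-! ### Transfer through the partial trace over the `A` factors -/

/-- Partial trace over all `A` factors. -/
noncomputable def trA (dX dA : Fin N → ℕ) (S : Matrix (BigIx dX dA) (BigIx dX dA) ℂ) :
    Matrix (PiIx dX) (PiIx dX) ℂ :=
  Matrix.of fun x y => ∑ a : PiIx dA, S (x, a) (y, a)

lemma trA_sub (dX dA : Fin N → ℕ) (S S' : Matrix (BigIx dX dA) (BigIx dX dA) ℂ) :
    trA dX dA (S - S') = trA dX dA S - trA dX dA S' := by
  ext x y
  simp [trA, Matrix.sub_apply, Finset.sum_sub_distrib]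

lemma trA_zero (dX dA : Fin N → ℕ) : trA dX dA 0 = 0 := by
  ext x y
  simp [trA]

lemma trA_depolX (dX dA : Fin N → ℕ) (i : Fin N) (S : Matrix (BigIx dX dA) (BigIx dX dA) ℂ) :
    trA dX dA (depolX dX dA i S) = Q dX i (trA dX dA S) := by
  ext x y
  simp only [trA, depolX, Q_apply, Matrix.of_apply, Finset.mul_sum]
  rw [Finset.sum_comm]

lemma trA_depolA (dX dA : Fin N → ℕ) (j : Fin N) (hdA : dA j ≠ 0)
    (S : Matrix (BigIx dX dA) (BigIx dX dA) ℂ) :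
    trA dX dA (depolA dX dA j S) = trA dX dA S := by
  ext x y
  simp only [trA, depolA, Matrix.of_apply, if_pos rfl, if_true]
  rw [← Finset.mul_sum]
  have heq : ∑ a : PiIx dA, ∑ z : Fin (dA j),
      S (x, Function.update a j z) (y, Function.update a j z)
      = (dA j : ℂ) * ∑ a : PiIx dA, S (x, a) (y, a) :=
    sum_update (d := dA) j fun a' => S (x, a') (y, a')
  rw [heq, inv_mul_cancel_left₀ (Nat.cast_ne_zero.2 hdA)]

lemma trA_foldD (dX dA : Fin N → ℕ) (l : List (Fin N))
    (T : Matrix (BigIx dX dA) (BigIx dX dA) ℂ) :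
    trA dX dA (l.foldr (fun i T' => T' - depolX dX dA i T') T)
      = appD dX l (trA dX dA T) := by
  induction l with
  | nil => rfl
  | cons i t ih => rw [List.foldr_cons, trA_sub, trA_depolX, ih, appD_cons]

lemma trA_foldQ (dX dA : Fin N → ℕ) (hdA : ∀ j, dA j ≠ 0) (l : List (Fin N))
    (T : Matrix (BigIx dX dA) (BigIx dX dA) ℂ) :
    trA dX dA (l.foldr (fun j T' => depolA dX dA j (depolX dX dA j T')) T)
      = appQ dX l (trA dX dA T) := by
  induction l with
  | nil => rfl
  | cons j t ih => rw [List.foldr_cons, trA_depolA dX dA j (hdA j), trA_depolX, ih, appQ_cons]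

/-! ### The key fixed-point argument -/

lemma appQ_eq_univ (dX : Fin N → ℕ)
    (M : Matrix (PiIx dX) (PiIx dX) ℂ)
    (h : ∀ I : Finset (Fin N), I.Nonempty → appD dX I.toList (appQ dX Iᶜ.toList M) = 0) :
    M = appQ dX (Finset.univ : Finset (Fin N)).toList M := by
  suffices H : ∀ n (L : Finset (Fin N)), Lᶜ.card = n →
      appQ dX L.toList M = appQ dX (Finset.univ : Finset (Fin N)).toList M by
    have h0 := H _ (∅ : Finset (Fin N)) rfl
    rwa [Finset.toList_empty, appQ_nil] at h0
  intro n
  induction n using Nat.strong_induction_on with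
  | _ n IH =>
    intro L hL
    rcases Nat.eq_zero_or_pos n with rfl | hn
    · have h1 : Lᶜ = ∅ := Finset.card_eq_zero.1 hL
      have h2 : L = Finset.univ := by
        simpa [Finset.compl_eq_empty_iff] using h1
      rw [h2]
    · have hLne : Lᶜ.Nonempty := Finset.card_pos.1 (hL ▸ hn)
      have h0 := h Lᶜ hLne
      rw [compl_compl] at h0
      rw [appD_expand dX _ (Finset.nodup_toList _), Finset.toList_toFinset] at h0
      have hterm : ∀ K ∈ Lᶜ.powerset,
          (-1 : ℂ) ^ K.card • appQ dX K.toList (appQ dX L.toList M)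
          = if K = ∅ then appQ dX L.toList M
            else (-1 : ℂ) ^ K.card • appQ dX (Finset.univ : Finset (Fin N)).toList M := by
        intro K hK
        have hsub : K ⊆ Lᶜ := Finset.mem_powerset.1 hK
        have hKL : Disjoint K L :=
          Finset.disjoint_left.2 fun a haK haL => (Finset.mem_compl.1 (hsub haK)) haL
        rcases eq_or_ne K ∅ with rfl | hKne
        · simp
        · rw [← appQ_union dX K L hKL]
          have hcard : ((K ∪ L)ᶜ).card < n := by
            have hKU : (K ∪ L)ᶜ = Lᶜ \ K := by
              ext a
              simp only [Finset.mem_compl, Finset.mem_union, Finset.mem_sdiff]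
              tauto
            rw [hKU, ← hL]
            exact Finset.card_lt_card
              (Finset.sdiff_ssubset hsub (Finset.nonempty_iff_ne_empty.2 hKne))
          rw [IH _ hcard (K ∪ L) rfl, if_neg hKne]
      rw [Finset.sum_congr rfl hterm] at h0
      rw [Finset.sum_ite] at h0
      have hfilter1 : Finset.filter (fun K => K = ∅) Lᶜ.powerset = {∅} := by
        ext K
        simp only [Finset.mem_filter, Finset.mem_powerset, Finset.mem_singleton]
        exact ⟨fun hh => hh.2, fun hh => ⟨by simp [hh], hh⟩⟩
      rw [hfilter1, Finset.sum_singleton, ← Finset.sum_smul] at h0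
      have hcoef : (∑ K ∈ Finset.filter (fun K => ¬K = ∅) Lᶜ.powerset, (-1 : ℂ) ^ K.card)
          = -1 := by
        have hz : ∑ K ∈ Lᶜ.powerset, (-1 : ℂ) ^ K.card = 0 := by
          have hzz := Finset.sum_powerset_neg_one_pow_card_of_nonempty hLne
          exact_mod_cast congrArg (fun z : ℤ => (z : ℂ)) hzz
        have hsplit := Finset.sum_filter_add_sum_filter_not Lᶜ.powerset
          (fun K => K = ∅) (fun K => (-1 : ℂ) ^ K.card)
        rw [hz] at hsplit
        rw [hfilter1, Finset.sum_singleton] at hsplit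
        simp only [Finset.card_empty, pow_zero] at hsplit
        linear_combination hsplit
      rw [hcoef, neg_one_smul] at h0
      exact sub_eq_zero.1 (by simpa [sub_eq_add_neg] using h0)

end Aux

/-- if `Tr S = ∏_i dim X_i` and `S` satisfies the process conditions (3),
then `Tr_{A_1⊗⋯⊗A_N} S = I_{X_1⊗⋯⊗X_N}`, i.e. `S` is the Choi matrix of a trace-preserving
map from the joint outputs of the parties to their joint inputs. -/
theorem statement_11 {N : ℕ} (dX dA : Fin N → ℕ)
    (S : Matrix (BigIx dX dA) (BigIx dX dA) ℂ)
    (htr : S.trace = ∏ i, (dX i : ℂ))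
    (hproc : ProcessConditions dX dA S) :
    (Matrix.of fun x y : PiIx dX => ∑ a : PiIx dA, S (x, a) (y, a)) = 1 := by
  by_cases hX : ∀ i, dX i ≠ 0
  swap
  · push_neg at hX
    obtain ⟨i0, hi0⟩ := hX
    ext x y
    exact (Fin.cast hi0 (x i0)).elim0
  by_cases hA : ∀ j, dA j ≠ 0
  swap
  · push_neg at hA
    obtain ⟨j0, hj0⟩ := hA
    haveI : IsEmpty (PiIx dA) := ⟨fun a => (Fin.cast hj0 (a j0)).elim0⟩
    have hz : S.trace = 0 := by
      rw [Matrix.trace]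
      have : (Finset.univ : Finset (BigIx dX dA)) = ∅ := by
        apply Finset.univ_eq_empty
      rw [this, Finset.sum_empty]
    rw [hz] at htr
    exact absurd htr.symm (Finset.prod_ne_zero_iff.2 fun i _ => Nat.cast_ne_zero.2 (hX i))
  -- main case
  have hM : trA dX dA S = appQ dX (Finset.univ : Finset (Fin N)).toList (trA dX dA S) := by
    apply appQ_eq_univ dX
    intro I hI
    have h1 := hproc I hI
    rw [foldr_comp, foldr_comp] at h1
    have h2 := congrArg (trA dX dA) h1
    rw [trA_foldD, trA_foldQ dX dA hA, trA_zero] at h2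
    exact h2
  have htrM : ∑ c : PiIx dX, trA dX dA S c c = ∏ i, (dX i : ℂ) := by
    rw [← htr, Matrix.trace]
    rw [Fintype.sum_prod_type]
    rfl
  show trA dX dA S = 1
  ext p q
  rw [hM]
  rw [appQ_closed dX hX _ (Finset.nodup_toList _) _ p q]
  simp only [Finset.toList_toFinset, Finset.compl_univ, Finset.prod_empty, inv_one, one_mul]
  have hmrg : ∀ c : PiIx dX, trA dX dA S (mrg dX Finset.univ p c) (mrg dX Finset.univ q c)
      = trA dX dA S c c := by
    intro c
    rw [mrg_univ, mrg_univ]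
  rw [Finset.sum_congr rfl fun c _ => hmrg c, htrM]
  rcases eq_or_ne p q with rfl | hpq
  · rw [Matrix.one_apply_eq]
    have hpr : (∏ i, (if p i = p i then ((dX i : ℂ))⁻¹ else 0)) = ∏ i, ((dX i : ℂ))⁻¹ :=
      Finset.prod_congr rfl fun i _ => if_pos rfl
    rw [hpr, Finset.prod_inv_distrib, inv_mul_cancel₀]
    exact Finset.prod_ne_zero_iff.2 fun i _ => Nat.cast_ne_zero.2 (hX i)
  · have : ∃ i, p i ≠ q i := by
      by_contra hc
      push_neg at hc
      exact hpq (funext hc)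
    obtain ⟨i0, hi0⟩ := this
    rw [Matrix.one_apply_ne hpq]
    rw [Finset.prod_eq_zero (Finset.mem_univ i0) (by rw [if_neg hi0])]
    rw [zero_mul]


end ParityErasurePaper
end
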